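/- arXiv:1307.7885 — 10 statements merged into one kernel-verified Lean document; each statement's English description precedes it below -/
import Mathlib

section
/- Let a, b : [0,T] → ℝ be continuous, and let w, z : [0,T] → ℝ be differentiable with z(0) ≥ w(0), w'(t) = a(t)·w(t)² + b(t) and z'(t) ≥ a(t)·z(t)² + b(t) on [0,T]. Then z(t) ≥ w(t) for all t ∈ [0,T]. -/
/-!
The difference `d = z - w` satisfies the linear differential inequality
`d' ≥ a (z² - w²) = a (z + w) d`. With `C` a primitive of `c = a (z + w)`, the integrating factor
makes `d · exp (-C)` nondecreasing, so `d` keeps the sign of `d 0 ≥ 0`.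
-/

open Set

theorem ContinuousOn.exists_hasDerivAt_Icc {c : ℝ → ℝ} {a b : ℝ} (hc : ContinuousOn c (Icc a b)) :
    ∃ C : ℝ → ℝ, ∀ t ∈ Icc a b, HasDerivAt C (c t) t := by
  rcases le_or_gt a b with hab | hba
  · -- extend `c` continuously to `ℝ` so that its integral is differentiable at `a` and `b` too
    set ce := IccExtend hab ((Icc a b).domRestrict c)
    have hce : Continuous ce := (continuousOn_iff_continuous_domRestrict.mp hc).Icc_extend'
    refine ⟨fun t => ∫ s in a..t, ce s, fun t ht => ?_⟩
    have := intervalIntegral.integral_hasDerivAt_right (hce.intervalIntegrable a t)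
      (hce.stronglyMeasurableAtFilter _ _) hce.continuousAt
    rwa [show ce t = c t from IccExtend_of_mem _ _ ht] at this
  · exact ⟨0, fun t ht => absurd (ht.1.trans ht.2) (not_le.mpr hba)⟩

theorem nonneg_of_mul_le_hasDerivAt {c d d' : ℝ → ℝ} {a b : ℝ} (hc : ContinuousOn c (Icc a b))
    (hd : ∀ t ∈ Icc a b, HasDerivAt d (d' t) t) (hineq : ∀ t ∈ Icc a b, c t * d t ≤ d' t)
    (ha : 0 ≤ d a) : ∀ t ∈ Icc a b, 0 ≤ d t := by
  obtain ⟨C, hC⟩ := hc.exists_hasDerivAt_Icc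
  set g : ℝ → ℝ := fun t => d t * Real.exp (-C t)
  have hg : ∀ t ∈ Icc a b, HasDerivAt g ((d' t - c t * d t) * Real.exp (-C t)) t := fun t ht =>
    ((hd t ht).mul (hC t ht).neg.exp).congr_deriv (by simp only [Pi.neg_apply]; ring)
  have hg_mono : MonotoneOn g (Icc a b) := by
    refine monotoneOn_of_hasDerivWithinAt_nonneg (convex_Icc a b)
      (f' := fun t => (d' t - c t * d t) * Real.exp (-C t))
      (fun t ht => (hg t ht).continuousAt.continuousWithinAt) (fun t ht => ?_) (fun t ht => ?_)
    · exact (hg t (interior_subset ht)).hasDerivWithinAt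
    · exact mul_nonneg (sub_nonneg.mpr (hineq t (interior_subset ht))) (Real.exp_pos _).le
  intro t ht
  have hga : 0 ≤ g a := mul_nonneg ha (Real.exp_pos _).le
  have hgt : 0 ≤ g t := hga.trans (hg_mono (left_mem_Icc.mpr (ht.1.trans ht.2)) ht ht.1)
  exact nonneg_of_mul_nonneg_left hgt (Real.exp_pos _)

theorem riccati_comparison_general (T : ℝ) (a b w z w' z' : ℝ → ℝ)
    (ha : ContinuousOn a (Icc 0 T))
    (hw : ∀ t ∈ Icc (0:ℝ) T, HasDerivAt w (w' t) t)
    (hz : ∀ t ∈ Icc (0:ℝ) T, HasDerivAt z (z' t) t)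
    (hweq : ∀ t ∈ Icc (0:ℝ) T, w' t = a t * (w t) ^ 2 + b t)
    (hzge : ∀ t ∈ Icc (0:ℝ) T, z' t ≥ a t * (z t) ^ 2 + b t)
    (h0 : z 0 ≥ w 0) :
    ∀ t ∈ Icc (0:ℝ) T, z t ≥ w t := by
  have hzw : ContinuousOn (fun t => z t + w t) (Icc 0 T) := fun t ht =>
    ((hz t ht).continuousAt.add (hw t ht).continuousAt).continuousWithinAt
  have hineq : ∀ t ∈ Icc (0:ℝ) T, a t * (z t + w t) * (z t - w t) ≤ z' t - w' t := by
    intro t ht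
    linear_combination hzge t ht + hweq t ht
  intro t ht
  exact sub_nonneg.mp (nonneg_of_mul_le_hasDerivAt (ha.mul hzw)
    (fun s hs => (hz s hs).sub (hw s hs)) hineq (sub_nonneg.mpr h0) t ht)

/-- Maximum principle / comparison lemma for Riccati-type ODEs:
if `w' = a w² + b` and `z' ≥ a z² + b` on `[0,T]` with `z 0 ≥ w 0`,
then `z ≥ w` on `[0,T]`. -/
theorem riccati_comparison (T : ℝ) (hT : 0 < T) (a b w z w' z' : ℝ → ℝ)
    (ha : ContinuousOn a (Icc 0 T)) (hb : ContinuousOn b (Icc 0 T))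
    (hw : ∀ t ∈ Icc (0:ℝ) T, HasDerivAt w (w' t) t)
    (hz : ∀ t ∈ Icc (0:ℝ) T, HasDerivAt z (z' t) t)
    (hweq : ∀ t ∈ Icc (0:ℝ) T, w' t = a t * (w t) ^ 2 + b t)
    (hzge : ∀ t ∈ Icc (0:ℝ) T, z' t ≥ a t * (z t) ^ 2 + b t)
    (h0 : z 0 ≥ w 0) :
    ∀ t ∈ Icc (0:ℝ) T, z t ≥ w t :=
  riccati_comparison_general T a b w z w' z' ha hw hz hweq hzge h0
end

section
/- Let c : (0, ρ_max) → ℝ be a positive C¹ function such that ρ ↦ c(ρ)/ρ is integrable at 0, and suppose the function 𝒢(ρ) := (1/c(ρ)) · d/dρ (ρ c(ρ)) satisfies 1 < 𝒢(ρ) < 2 for all ρ. Define H(ρ) = ∫₀^ρ c(s)/s ds. Then H(ρ) ≥ c(ρ) for all ρ > 0. -/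
/-!
The bound `𝒢 < 2` says `ρ c' < c`, so `(H - c)' = c / ρ - c' ≥ 0` and `H - c` is
nondecreasing.
Since `c / ρ` is integrable at `0` while `1 / ρ` is not, `c` takes arbitrarily small values
near `0`; hence `H ρ - c ρ ≥ H ε - c ε ≥ -c ε` is bounded below by numbers tending to `0`.
-/

open Set MeasureTheory Filter

lemma exists_lt_of_integrableOn_div_self {f : ℝ → ℝ} {ρ δ : ℝ} (hρ : 0 < ρ)
    (hf : IntegrableOn (fun s => f s / s) (Ioc 0 ρ)) (hδ : 0 < δ) :
    ∃ ε ∈ Ioo 0 ρ, f ε < δ := by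
  by_contra! hge
  have hbound : ∀ᵐ s ∂volume.restrict (Ioo 0 ρ), ‖δ * s⁻¹‖ ≤ f s / s := by
    filter_upwards [ae_restrict_mem measurableSet_Ioo] with s hs
    rw [Real.norm_of_nonneg (by have := hs.1; positivity), ← div_eq_mul_inv]
    exact div_le_div_of_nonneg_right (hge s hs) hs.1.le
  have hδinv : IntegrableOn (fun s : ℝ => δ * s⁻¹) (Ioo 0 ρ) :=
    (hf.mono_set Ioo_subset_Ioc_self).mono' (by fun_prop) hbound
  have hinv : IntervalIntegrable (fun s : ℝ => s⁻¹) volume 0 ρ := by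
    rw [intervalIntegrable_iff_integrableOn_Ioo_of_le hρ.le]
    simpa [IntegrableOn, ← mul_assoc, inv_mul_cancel₀ hδ.ne'] using hδinv.const_mul δ⁻¹
  rw [intervalIntegrable_inv_iff] at hinv
  rcases hinv with h | h
  · exact hρ.ne h
  · exact h left_mem_uIcc

lemma hasDerivAt_integral_Ioc_zero {f : ℝ → ℝ} {b x : ℝ} (hf : ContinuousOn f (Ioo 0 b))
    (hx : x ∈ Ioo 0 b) (hint : IntegrableOn f (Ioc 0 x)) :
    HasDerivAt (fun y => ∫ t in Ioc 0 y, f t) (f x) x := by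
  have hprim := intervalIntegral.integral_hasDerivAt_right
    ((intervalIntegrable_iff_integrableOn_Ioc_of_le hx.1.le).2 hint)
    (hf.stronglyMeasurableAtFilter isOpen_Ioo x hx) (hf.continuousAt (isOpen_Ioo.mem_nhds hx))
  refine hprim.congr_of_eventuallyEq ?_
  filter_upwards [Ioi_mem_nhds hx.1] with y hy
  exact (intervalIntegral.integral_of_le (le_of_lt hy)).symm

lemma monotoneOn_Ioo_of_hasDerivAt_nonneg {f f' : ℝ → ℝ} {a b : ℝ}
    (hf : ∀ x ∈ Ioo a b, HasDerivAt f (f' x) x) (hf' : ∀ x ∈ Ioo a b, 0 ≤ f' x) :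
    MonotoneOn f (Ioo a b) := by
  refine monotoneOn_of_hasDerivWithinAt_nonneg (f' := f') (convex_Ioo a b)
    (fun x hx => (hf x hx).continuousAt.continuousWithinAt) ?_ ?_ <;> rw [interior_Ioo]
  · exact fun x hx => (hf x hx).hasDerivWithinAt
  · exact hf'

theorem H_ge_c_general (ρmax : ℝ) (c c' H : ℝ → ℝ)
    (hcpos : ∀ ρ ∈ Ioo (0:ℝ) ρmax, 0 < c ρ)
    (hcderiv : ∀ ρ ∈ Ioo (0:ℝ) ρmax, HasDerivAt c (c' ρ) ρ)
    (hint : ∀ ρ ∈ Ioo (0:ℝ) ρmax, IntegrableOn (fun s => c s / s) (Ioc 0 ρ))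
    (hG : ∀ ρ ∈ Ioo (0:ℝ) ρmax,
      1 < (c ρ + ρ * c' ρ) / c ρ ∧ (c ρ + ρ * c' ρ) / c ρ < 2)
    (hH : ∀ ρ ∈ Ioo (0:ℝ) ρmax, H ρ = ∫ s in Ioc (0:ℝ) ρ, c s / s) :
    ∀ ρ ∈ Ioo (0:ℝ) ρmax, c ρ ≤ H ρ := by
  intro ρ hρ
  have hcont : ContinuousOn (fun s => c s / s) (Ioo 0 ρmax) := fun s hs =>
    ((hcderiv s hs).continuousAt.div continuousAt_id hs.1.ne').continuousWithinAt
  have hHderiv : ∀ s ∈ Ioo 0 ρmax, HasDerivAt H (c s / s) s := fun s hs =>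
    (hasDerivAt_integral_Ioc_zero hcont hs (hint s hs)).congr_of_eventuallyEq
      (eventually_of_mem (isOpen_Ioo.mem_nhds hs) hH)
  have hslope : ∀ s ∈ Ioo 0 ρmax, c' s ≤ c s / s := by
    intro s hs
    have h2 := (div_lt_iff₀ (hcpos s hs)).1 (hG s hs).2
    rw [le_div_iff₀ hs.1]
    linarith
  have hmono : MonotoneOn (fun s => H s - c s) (Ioo 0 ρmax) :=
    monotoneOn_Ioo_of_hasDerivAt_nonneg (fun s hs => (hHderiv s hs).sub (hcderiv s hs))
      (fun s hs => sub_nonneg.2 (hslope s hs))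
  refine le_of_forall_pos_le_add fun δ hδ => ?_
  obtain ⟨ε, hε, hcε⟩ := exists_lt_of_integrableOn_div_self hρ.1 (hint ρ hρ) hδ
  have hεmem : ε ∈ Ioo 0 ρmax := ⟨hε.1, hε.2.trans hρ.2⟩
  have hHε : 0 ≤ H ε := by
    rw [hH ε hεmem]
    refine setIntegral_nonneg measurableSet_Ioc fun t ht => ?_
    exact div_nonneg (hcpos t ⟨ht.1, ht.2.trans_lt hεmem.2⟩).le ht.1.le
  have := hmono hεmem hρ hε.2.le
  linarith

/-- For a gas with sound speed `c > 0` of class `C¹` on `(0, ρmax)` such that the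
fundamental derivative `𝒢(ρ) = (1/c)·d/dρ(ρ c) = (c + ρ c')/c` satisfies `1 < 𝒢 < 2`
and `ρ ↦ c(ρ)/ρ` is integrable at `0`, the Riemann invariant function
`H(ρ) = ∫₀^ρ c(s)/s ds` satisfies `H ≥ c`. -/
theorem H_ge_c (ρmax : ℝ) (hρmax : 0 < ρmax) (c c' H : ℝ → ℝ)
    (hcpos : ∀ ρ ∈ Ioo (0:ℝ) ρmax, 0 < c ρ)
    (hcderiv : ∀ ρ ∈ Ioo (0:ℝ) ρmax, HasDerivAt c (c' ρ) ρ)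
    (hint : ∀ ρ ∈ Ioo (0:ℝ) ρmax, IntegrableOn (fun s => c s / s) (Ioc 0 ρ))
    (hG : ∀ ρ ∈ Ioo (0:ℝ) ρmax,
      1 < (c ρ + ρ * c' ρ) / c ρ ∧ (c ρ + ρ * c' ρ) / c ρ < 2)
    (hH : ∀ ρ ∈ Ioo (0:ℝ) ρmax, H ρ = ∫ s in Ioc (0:ℝ) ρ, c s / s) :
    ∀ ρ ∈ Ioo (0:ℝ) ρmax, c ρ ≤ H ρ :=
  H_ge_c_general ρmax c c' H hcpos hcderiv hint hG hH
end

section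
/- Let p : (0, ρ_max) → ℝ be C¹ with p'(ρ) = c(ρ)² where c > 0, let H(ρ) = ∫₀^ρ c(s)/s ds (assumed finite), and fix ρ⁺ > 0. Define F(ρ, ρ⁺) = (p(ρ) − p(ρ⁺))·(1/ρ⁺ − 1/ρ) for ρ ≥ ρ⁺. Then for all ρ ≥ ρ⁺, H(ρ) − H(ρ⁺) ≤ √(F(ρ, ρ⁺)). -/
open Set MeasureTheory

/-!
Write `H ρ - H ρ⁺ = ∫_{ρ⁺}^{ρ} c(s) · s⁻¹ ds` and apply Cauchy–Schwarz: both factors are square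
roots of derivatives, `c² = p'` and `s⁻² = (-s⁻¹)'`, so the two `L²` norms are
`√(p ρ - p ρ⁺)` and `√(1/ρ⁺ - 1/ρ)` by the fundamental theorem of calculus.
-/

theorem integral_mul_le_sqrt_mul_sqrt {α : Type*} [MeasurableSpace α] {μ : Measure α}
    {f g : α → ℝ} (hf : MemLp f 2 μ) (hg : MemLp g 2 μ) :
    ∫ a, f a * g a ∂μ ≤ √(∫ a, f a ^ 2 ∂μ) * √(∫ a, g a ^ 2 ∂μ) := by
  have hpq : Real.HolderConjugate 2 2 := .two_two
  have holder := integral_mul_norm_le_Lp_mul_Lq hpq (p := 2) (q := 2)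
    (by simpa using hf) (by simpa using hg)
  simp only [Real.rpow_two, Real.norm_eq_abs, sq_abs, ← Real.sqrt_eq_rpow] at holder
  calc ∫ a, f a * g a ∂μ ≤ ‖∫ a, f a * g a ∂μ‖ := le_abs_self _
    _ ≤ ∫ a, ‖f a * g a‖ ∂μ := norm_integral_le_integral_norm _
    _ ≤ _ := by simpa only [norm_mul, Real.norm_eq_abs] using holder

section SquareDerivative

variable {F f : ℝ → ℝ} {a b : ℝ}

theorem integrableOn_sq_of_hasDerivAt_sq (hF : ∀ x ∈ Icc a b, HasDerivAt F (f x ^ 2) x) :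
    IntegrableOn (fun x => f x ^ 2) (Ioc a b) :=
  intervalIntegral.integrableOn_deriv_of_nonneg
    (fun x hx => (hF x hx).continuousAt.continuousWithinAt)
    (fun x hx => hF x (Ioo_subset_Icc_self hx)) (fun x _ => sq_nonneg (f x))

theorem integral_sq_of_hasDerivAt_sq (hab : a ≤ b)
    (hF : ∀ x ∈ Icc a b, HasDerivAt F (f x ^ 2) x) :
    ∫ x in Ioc a b, f x ^ 2 = F b - F a := by
  rw [← intervalIntegral.integral_of_le hab]
  exact intervalIntegral.integral_eq_sub_of_hasDerivAt_of_le hab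
    (fun x hx => (hF x hx).continuousAt.continuousWithinAt)
    (fun x hx => hF x (Ioo_subset_Icc_self hx))
    ((intervalIntegrable_iff_integrableOn_Ioc_of_le hab).2
      (integrableOn_sq_of_hasDerivAt_sq hF))

theorem memLp_two_of_hasDerivAt_sq (hF : ∀ x ∈ Icc a b, HasDerivAt F (f x ^ 2) x)
    (hf : AEStronglyMeasurable f (volume.restrict (Ioc a b))) :
    MemLp f 2 (volume.restrict (Ioc a b)) :=
  (memLp_two_iff_integrable_sq hf).2 (integrableOn_sq_of_hasDerivAt_sq hF)

end SquareDerivative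

theorem setIntegral_mul_le_sqrt_of_hasDerivAt_sq {F G f g : ℝ → ℝ} {a b : ℝ} (hab : a ≤ b)
    (hF : ∀ x ∈ Icc a b, HasDerivAt F (f x ^ 2) x)
    (hG : ∀ x ∈ Icc a b, HasDerivAt G (g x ^ 2) x)
    (hf : AEStronglyMeasurable f (volume.restrict (Ioc a b)))
    (hg : AEStronglyMeasurable g (volume.restrict (Ioc a b))) :
    ∫ x in Ioc a b, f x * g x ≤ √((F b - F a) * (G b - G a)) := by
  have hFab : 0 ≤ F b - F a :=
    integral_sq_of_hasDerivAt_sq hab hF ▸ integral_nonneg fun x => sq_nonneg (f x)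
  rw [Real.sqrt_mul hFab, ← integral_sq_of_hasDerivAt_sq hab hF,
    ← integral_sq_of_hasDerivAt_sq hab hG]
  exact integral_mul_le_sqrt_mul_sqrt (memLp_two_of_hasDerivAt_sq hF hf)
    (memLp_two_of_hasDerivAt_sq hG hg)

theorem hasDerivAt_neg_inv {x : ℝ} (hx : x ≠ 0) : HasDerivAt (fun y => -y⁻¹) (x⁻¹ ^ 2) x :=
  (hasDerivAt_inv hx).neg.congr_deriv (by rw [neg_neg, inv_pow])

theorem setIntegral_Ioc_sub_setIntegral_Ioc {f : ℝ → ℝ} {a b c : ℝ} (hab : a ≤ b) (hbc : b ≤ c)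
    (hf : IntegrableOn f (Ioc a c)) :
    (∫ x in Ioc a c, f x) - ∫ x in Ioc a b, f x = ∫ x in Ioc b c, f x := by
  rw [← intervalIntegral.integral_of_le (hab.trans hbc), ← intervalIntegral.integral_of_le hab,
    ← intervalIntegral.integral_of_le hbc, intervalIntegral.integral_interval_sub_left]
  · exact (intervalIntegrable_iff_integrableOn_Ioc_of_le (hab.trans hbc)).2 hf
  · exact (intervalIntegrable_iff_integrableOn_Ioc_of_le hab).2
      (hf.mono_set (Ioc_subset_Ioc_right hbc))

theorem aestronglyMeasurable_of_integrableOn_div {f : ℝ → ℝ} {s : Set ℝ} (hs : MeasurableSet s)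
    (h0 : (0 : ℝ) ∉ s) (hf : IntegrableOn (fun x => f x / x) s) :
    AEStronglyMeasurable f (volume.restrict s) := by
  refine (hf.aestronglyMeasurable.mul aestronglyMeasurable_id).congr ?_
  filter_upwards [ae_restrict_mem hs] with x hx
  exact div_mul_cancel₀ (f x) (ne_of_mem_of_not_mem hx h0)

theorem H_diff_le_sqrt_F_general (ρmax : ℝ) (p c H : ℝ → ℝ)
    (hp : ∀ ρ ∈ Ioo (0:ℝ) ρmax, HasDerivAt p ((c ρ) ^ 2) ρ)
    (hint : ∀ ρ ∈ Ioo (0:ℝ) ρmax, IntegrableOn (fun s => c s / s) (Ioc 0 ρ))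
    (hH : ∀ ρ ∈ Ioo (0:ℝ) ρmax, H ρ = ∫ s in Ioc (0:ℝ) ρ, c s / s)
    (ρp : ℝ) (hρp : ρp ∈ Ioo (0:ℝ) ρmax) :
    ∀ ρ ∈ Ico ρp ρmax,
      H ρ - H ρp ≤ Real.sqrt ((p ρ - p ρp) * (1 / ρp - 1 / ρ)) := by
  rintro ρ ⟨hle, hρmax⟩
  have hρ : ρ ∈ Ioo 0 ρmax := ⟨hρp.1.trans_le hle, hρmax⟩
  have hIcc : Icc ρp ρ ⊆ Ioo 0 ρmax := fun x hx => ⟨hρp.1.trans_le hx.1, hx.2.trans_lt hρmax⟩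
  have hc : AEStronglyMeasurable c (volume.restrict (Ioc ρp ρ)) :=
    aestronglyMeasurable_of_integrableOn_div measurableSet_Ioc (fun h => hρp.1.not_gt h.1)
      ((hint ρ hρ).mono_set (Ioc_subset_Ioc_left hρp.1.le))
  have cauchySchwarz := setIntegral_mul_le_sqrt_of_hasDerivAt_sq hle (fun x hx => hp x (hIcc hx))
    (fun x hx => hasDerivAt_neg_inv (hρp.1.trans_le hx.1).ne') hc
    measurable_inv.aestronglyMeasurable
  rw [hH ρ hρ, hH ρp hρp, setIntegral_Ioc_sub_setIntegral_Ioc hρp.1.le hle (hint ρ hρ)]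
  simpa only [div_eq_mul_inv, one_mul, neg_sub_neg] using cauchySchwarz

/-- With pressure `p` satisfying `p' = c²`, `c > 0`, and Riemann invariant
`H(ρ) = ∫₀^ρ c(s)/s ds`, for any fixed `ρ⁺ > 0` and `F(ρ,ρ⁺) = (p ρ − p ρ⁺)(1/ρ⁺ − 1/ρ)`
one has `H(ρ) − H(ρ⁺) ≤ √(F(ρ,ρ⁺))` for all `ρ ≥ ρ⁺`. -/
theorem H_diff_le_sqrt_F (ρmax : ℝ) (p c H : ℝ → ℝ)
    (hcpos : ∀ ρ ∈ Ioo (0:ℝ) ρmax, 0 < c ρ)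
    (hp : ∀ ρ ∈ Ioo (0:ℝ) ρmax, HasDerivAt p ((c ρ) ^ 2) ρ)
    (hint : ∀ ρ ∈ Ioo (0:ℝ) ρmax, IntegrableOn (fun s => c s / s) (Ioc 0 ρ))
    (hH : ∀ ρ ∈ Ioo (0:ℝ) ρmax, H ρ = ∫ s in Ioc (0:ℝ) ρ, c s / s)
    (ρp : ℝ) (hρp : ρp ∈ Ioo (0:ℝ) ρmax) :
    ∀ ρ ∈ Ico ρp ρmax,
      H ρ - H ρp ≤ Real.sqrt ((p ρ - p ρp) * (1 / ρp - 1 / ρ)) :=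
  H_diff_le_sqrt_F_general ρmax p c H hp hint hH ρp hρp
end

section
/- Under the assumptions of the previous lemma, let u⁺ ∈ ℝ, ρ⁻ ≥ ρ⁺ > 0, and define u⁻ = u⁺ + √(F(ρ⁻, ρ⁺)) where F(ρ,ρ⁺) = (p(ρ) − p(ρ⁺))(1/ρ⁺ − 1/ρ). Then u⁻ − H(ρ⁻) ≥ u⁺ − H(ρ⁺). In particular, if u⁺ − H(ρ⁺) ≥ 0 then u⁻ − H(ρ⁻) ≥ 0. -/
open Set MeasureTheory

/-!
Through a 2-shock, `H(ρ⁻) - H(ρ⁺) = ∫_{ρ⁺}^{ρ⁻} c(s) · (1/s) ds`, and by Cauchy–Schwarz this is at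
most `√(∫ c² · ∫ 1/s²) = √((p(ρ⁻) - p(ρ⁺))(1/ρ⁺ - 1/ρ⁻)) = u⁻ - u⁺`. Cauchy–Schwarz is obtained
without integrability of `c²` by integrating the pointwise bound `2 c/s ≤ t c² + 1/(t s²)`
against the primitive `t p(s) - 1/(t s)` and then optimising over `t > 0`.
-/

lemma two_mul_mul_le_mul_sq_add_sq_div {t : ℝ} (ht : 0 < t) (u v : ℝ) :
    2 * (u * v) ≤ t * u ^ 2 + v ^ 2 / t := by
  have hdiff : t * u ^ 2 + v ^ 2 / t - 2 * (u * v) = (t * u - v) ^ 2 / t := by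
    field_simp
    ring
  have : 0 ≤ (t * u - v) ^ 2 / t := by positivity
  linarith

lemma le_sqrt_mul_of_forall_two_mul_le {x a b : ℝ} (hb : 0 ≤ b)
    (h : ∀ t > 0, 2 * x ≤ t * a + b / t) : x ≤ √(a * b) := by
  rcases le_or_gt x 0 with hx | hx
  · exact hx.trans (Real.sqrt_nonneg _)
  rcases le_or_gt a 0 with ha | ha
  · -- `b / t < x` for `t = (b + 1) / x`, while `t * a ≤ 0`
    have ht : 0 < (b + 1) / x := by positivity
    have hbt : b / ((b + 1) / x) < x := by
      rw [div_div_eq_mul_div, div_lt_iff₀ (by positivity)]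
      nlinarith
    nlinarith [h _ ht, mul_nonpos_of_nonneg_of_nonpos ht.le ha]
  · have hsq : x ^ 2 ≤ a * b := by
      have hx_le : x ≤ b * a / x := by
        have ht := h (x / a) (by positivity)
        rw [div_mul_cancel₀ _ ha.ne', div_div_eq_mul_div] at ht
        linarith
      rw [le_div_iff₀ hx] at hx_le
      nlinarith
    exact (Real.le_sqrt hx.le (by nlinarith)).2 hsq

section ShockIntegral

variable {p c : ℝ → ℝ} {a b : ℝ}

lemma two_mul_integral_div_le (ha : 0 < a) (hab : a ≤ b)
    (hp : ∀ x ∈ Icc a b, HasDerivAt p (c x ^ 2) x)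
    (hint : IntegrableOn (fun x => c x / x) (Icc a b)) {t : ℝ} (ht : 0 < t) :
    2 * ∫ x in a..b, c x / x ≤ t * (p b - p a) + (1 / a - 1 / b) / t := by
  have hpos : ∀ x ∈ Icc a b, 0 < x := fun x hx => ha.trans_le hx.1
  have hderiv : ∀ x ∈ Icc a b,
      HasDerivAt (fun y => t * p y - t⁻¹ * y⁻¹) (t * c x ^ 2 + (1 / x) ^ 2 / t) x := by
    intro x hx
    refine (((hp x hx).const_mul t).sub
      ((hasDerivAt_inv (hpos x hx).ne').const_mul t⁻¹)).congr_deriv ?_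
    field_simp
    ring
  have hbound := intervalIntegral.integral_le_sub_of_hasDeriv_right_of_le hab
    (fun x hx => (hderiv x hx).continuousAt.continuousWithinAt)
    (fun x hx => (hderiv x (Ioo_subset_Icc_self hx)).hasDerivWithinAt)
    (hint.const_mul 2)
    (fun x _ => by simpa only [div_eq_mul_one_div (c x) x]
      using two_mul_mul_le_mul_sq_add_sq_div ht (c x) (1 / x))
  rw [intervalIntegral.integral_const_mul] at hbound
  convert hbound using 1
  field_simp
  ring

lemma integral_div_le_sqrt (ha : 0 < a) (hab : a ≤ b)
    (hp : ∀ x ∈ Icc a b, HasDerivAt p (c x ^ 2) x)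
    (hint : IntegrableOn (fun x => c x / x) (Icc a b)) :
    ∫ x in a..b, c x / x ≤ √((p b - p a) * (1 / a - 1 / b)) := by
  have hinv : 0 ≤ 1 / a - 1 / b := sub_nonneg.2 (one_div_le_one_div_of_le ha hab)
  exact le_sqrt_mul_of_forall_two_mul_le hinv fun t ht => two_mul_integral_div_le ha hab hp hint ht

end ShockIntegral

theorem w1_jump_general (ρmax : ℝ) (p c H : ℝ → ℝ)
    (hp : ∀ ρ ∈ Ioo (0:ℝ) ρmax, HasDerivAt p ((c ρ) ^ 2) ρ)
    (hint : ∀ ρ ∈ Ioo (0:ℝ) ρmax, IntegrableOn (fun s => c s / s) (Ioc 0 ρ))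
    (hH : ∀ ρ ∈ Ioo (0:ℝ) ρmax, H ρ = ∫ s in Ioc (0:ℝ) ρ, c s / s)
    (up um ρm ρp : ℝ)
    (hρp : ρp ∈ Ioo (0:ℝ) ρmax) (hρm : ρm ∈ Ioo (0:ℝ) ρmax) (hle : ρp ≤ ρm)
    (hum : um = up + Real.sqrt ((p ρm - p ρp) * (1 / ρp - 1 / ρm))) :
    um - H ρm ≥ up - H ρp ∧ (0 ≤ up - H ρp → 0 ≤ um - H ρm) := by
  have hIcc : Icc ρp ρm ⊆ Ioo 0 ρmax := Icc_subset_Ioo hρp.1 hρm.2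
  have hII : ∀ ρ ∈ Ioo (0:ℝ) ρmax, IntervalIntegrable (fun s => c s / s) volume 0 ρ :=
    fun ρ hρ => (intervalIntegrable_iff_integrableOn_Ioc_of_le hρ.1.le).2 (hint ρ hρ)
  have hHsub : H ρm - H ρp = ∫ s in ρp..ρm, c s / s := by
    rw [hH ρm hρm, hH ρp hρp, ← intervalIntegral.integral_of_le hρm.1.le,
      ← intervalIntegral.integral_of_le hρp.1.le]
    exact intervalIntegral.integral_interval_sub_left (hII ρm hρm) (hII ρp hρp)
  have hbound := integral_div_le_sqrt hρp.1 hle (fun x hx => hp x (hIcc hx))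
    ((hint ρm hρm).mono_set fun x hx => ⟨hρp.1.trans_le hx.1, hx.2⟩)
  have hjump : um - H ρm ≥ up - H ρp := by linarith
  exact ⟨hjump, fun h => h.trans hjump⟩

/-- Rankine–Hugoniot consequence: with `u⁻ = u⁺ + √(F(ρ⁻,ρ⁺))`,
`F(ρ,ρ⁺) = (p ρ − p ρ⁺)(1/ρ⁺ − 1/ρ)` and `ρ⁻ ≥ ρ⁺ > 0`, the first Riemann invariant
increases through the shock: `u⁻ − H(ρ⁻) ≥ u⁺ − H(ρ⁺)`; in particular nonnegativity
of `w₁⁺` implies that of `w₁⁻`. -/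
theorem w1_jump (ρmax : ℝ) (p c H : ℝ → ℝ)
    (hcpos : ∀ ρ ∈ Ioo (0:ℝ) ρmax, 0 < c ρ)
    (hp : ∀ ρ ∈ Ioo (0:ℝ) ρmax, HasDerivAt p ((c ρ) ^ 2) ρ)
    (hint : ∀ ρ ∈ Ioo (0:ℝ) ρmax, IntegrableOn (fun s => c s / s) (Ioc 0 ρ))
    (hH : ∀ ρ ∈ Ioo (0:ℝ) ρmax, H ρ = ∫ s in Ioc (0:ℝ) ρ, c s / s)
    (up um ρm ρp : ℝ)
    (hρp : ρp ∈ Ioo (0:ℝ) ρmax) (hρm : ρm ∈ Ioo (0:ℝ) ρmax) (hle : ρp ≤ ρm)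
    (hum : um = up + Real.sqrt ((p ρm - p ρp) * (1 / ρp - 1 / ρm))) :
    um - H ρm ≥ up - H ρp ∧ (0 ≤ up - H ρp → 0 ≤ um - H ρm) :=
  w1_jump_general ρmax p c H hp hint hH up um ρm ρp hρp hρm hle hum
end

section
/- Let p be C¹ on (0, ρ_max) with p'(ρ) = c(ρ)² > 0, and suppose 𝒢(ρ) = (1/c)·d/dρ(ρc) > 0. Fix ρ⁺ > 0 and define ξ(ρ, ρ⁺) = p(ρ) − p(ρ⁺) − (ρ c(ρ))² (1/ρ⁺ − 1/ρ) for ρ ≥ ρ⁺. Then ∂ξ/∂ρ = −2ρ c(ρ)² 𝒢(ρ)·(1/ρ⁺ − 1/ρ) ≤ 0, and consequently ξ(ρ, ρ⁺) ≤ 0 for all ρ ≥ ρ⁺. -/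
open Set

/-! The chain rule gives `ξ' = c² − 2ρc(c + ρc')(1/ρ⁺ − 1/ρ) − c²`: the two `c²` terms cancel,
and `c(c + ρc') = c²𝒢`, so `ξ' = −2ρc²𝒢(1/ρ⁺ − 1/ρ)`, which is nonpositive for `ρ ≥ ρ⁺`.
Hence `ξ(·, ρ⁺)` is antitone on `[ρ⁺, ρmax)` and vanishes at `ρ⁺`. -/

lemma hasDerivAt_sub_sq_mul_sub_inv {p c : ℝ → ℝ} {c' a b ρ : ℝ} (hρ : ρ ≠ 0)
    (hc : HasDerivAt c c' ρ) (hp : HasDerivAt p (c ρ ^ 2) ρ) :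
    HasDerivAt (fun x => p x - b - (x * c x) ^ 2 * (a - 1 / x))
      (-2 * ρ * c ρ * (c ρ + ρ * c') * (a - 1 / ρ)) ρ := by
  have hinv : HasDerivAt (fun x : ℝ => a - 1 / x) (ρ ^ 2)⁻¹ ρ := by
    simpa only [one_div, sub_neg_eq_add, zero_sub, neg_neg, zero_add] using
      (hasDerivAt_inv hρ).const_sub a
  have hprod : HasDerivAt (fun x => (x * c x) ^ 2 * (a - 1 / x))
      (2 * (ρ * c ρ) ^ 1 * (1 * c ρ + ρ * c') * (a - 1 / ρ) + (ρ * c ρ) ^ 2 * (ρ ^ 2)⁻¹) ρ :=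
    (((hasDerivAt_id ρ).mul hc).pow 2).mul hinv
  refine ((hp.sub_const b).sub hprod).congr_deriv ?_
  field_simp
  ring

lemma Convex.antitoneOn_of_hasDerivAt_nonpos {D : Set ℝ} (hD : Convex ℝ D) {f f' : ℝ → ℝ}
    (hf : ∀ x ∈ D, HasDerivAt f (f' x) x) (hf₀ : ∀ x ∈ D, f' x ≤ 0) : AntitoneOn f D :=
  antitoneOn_of_hasDerivWithinAt_nonpos hD
    (fun x hx => (hf x hx).continuousAt.continuousWithinAt)
    (fun x hx => (hf x (interior_subset hx)).hasDerivWithinAt)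
    (fun x hx => hf₀ x (interior_subset hx))

/-- With `p' = c² > 0` and positive fundamental derivative
`𝒢 = (1/c)·d/dρ(ρc) = (c + ρ c')/c > 0`, the function
`ξ(ρ,ρ⁺) = p ρ − p ρ⁺ − (ρ c ρ)²(1/ρ⁺ − 1/ρ)` has derivative
`−2ρ c² 𝒢 (1/ρ⁺ − 1/ρ) ≤ 0` on `ρ ≥ ρ⁺`, hence `ξ ≤ 0` there. -/
theorem xi_nonpos (ρmax : ℝ) (p c c' : ℝ → ℝ)
    (hcpos : ∀ ρ ∈ Ioo (0:ℝ) ρmax, 0 < c ρ)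
    (hcd : ∀ ρ ∈ Ioo (0:ℝ) ρmax, HasDerivAt c (c' ρ) ρ)
    (hp : ∀ ρ ∈ Ioo (0:ℝ) ρmax, HasDerivAt p ((c ρ) ^ 2) ρ)
    (G : ℝ → ℝ)
    (hGdef : ∀ ρ ∈ Ioo (0:ℝ) ρmax, G ρ = (c ρ + ρ * c' ρ) / c ρ)
    (hGpos : ∀ ρ ∈ Ioo (0:ℝ) ρmax, 0 < G ρ)
    (ρp : ℝ) (hρp : ρp ∈ Ioo (0:ℝ) ρmax)
    (ξ : ℝ → ℝ)
    (hξ : ∀ ρ, ξ ρ = p ρ - p ρp - (ρ * c ρ) ^ 2 * (1 / ρp - 1 / ρ)) :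
    (∀ ρ ∈ Ico ρp ρmax,
        HasDerivAt ξ (-2 * ρ * (c ρ) ^ 2 * G ρ * (1 / ρp - 1 / ρ)) ρ ∧
        -2 * ρ * (c ρ) ^ 2 * G ρ * (1 / ρp - 1 / ρ) ≤ 0) ∧
    (∀ ρ ∈ Ico ρp ρmax, ξ ρ ≤ 0) := by
  have hsub : Ico ρp ρmax ⊆ Ioo 0 ρmax := fun ρ hρ => ⟨hρp.1.trans_le hρ.1, hρ.2⟩
  have hderiv : ∀ ρ ∈ Ico ρp ρmax,
      HasDerivAt ξ (-2 * ρ * (c ρ) ^ 2 * G ρ * (1 / ρp - 1 / ρ)) ρ := by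
    intro ρ hρ
    have hρ' := hsub hρ
    have hc : c ρ ≠ 0 := (hcpos ρ hρ').ne'
    rw [funext hξ]
    refine (hasDerivAt_sub_sq_mul_sub_inv hρ'.1.ne' (hcd ρ hρ') (hp ρ hρ')).congr_deriv ?_
    rw [hGdef ρ hρ']
    field_simp
  have hsign : ∀ ρ ∈ Ico ρp ρmax, -2 * ρ * (c ρ) ^ 2 * G ρ * (1 / ρp - 1 / ρ) ≤ 0 := by
    intro ρ hρ
    have hρ' := hsub hρ
    refine mul_nonpos_of_nonpos_of_nonneg ?_ (sub_nonneg.2 (one_div_le_one_div_of_le hρp.1 hρ.1))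
    have := hGpos ρ hρ'
    have := hρ'.1
    have : 0 ≤ 2 * ρ * c ρ ^ 2 * G ρ := by positivity
    linarith
  refine ⟨fun ρ hρ => ⟨hderiv ρ hρ, hsign ρ hρ⟩, fun ρ hρ => ?_⟩
  calc ξ ρ ≤ ξ ρp :=
        (convex_Ico ρp ρmax).antitoneOn_of_hasDerivAt_nonpos hderiv hsign
          ⟨le_rfl, hρ.1.trans_lt hρ.2⟩ hρ hρ.1
    _ = 0 := by rw [hξ]; ring
end

section
/- For a gas with p' = c² > 0 and 𝒢 > 0, a 2-shock satisfying the jump conditions U = (ρ⁺u⁺ − ρ⁻u⁻)/(ρ⁺ − ρ⁻), u⁻ − u⁺ = √((p⁻ − p⁺)(1/ρ⁺ − 1/ρ⁻)), and ρ⁻ > ρ⁺ satisfies the full Lax entropy conditions: λ₁(ρ⁻,u⁻) < U < λ₂(ρ⁻,u⁻) and U ≥ λ₂(ρ⁺,u⁺), where λ₁ = u − c(ρ) and λ₂ = u + c(ρ). -/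
/-!
Write `m(ρ) = ρ c(ρ)` and `v = 1/ρ`. Since `𝒢 = m'/c > 0`, `m` is strictly increasing, and
`dp/dv = -m²`, so the chord slope `j² = (p⁻ - p⁺)/(v⁺ - v⁻)` of the Hugoniot curve lies strictly
between `m(ρ⁺)²` and `m(ρ⁻)²`. The Rankine–Hugoniot conditions say that `j` is the mass flux
through the shock, `j = ρ⁻(U - u⁻) = ρ⁺(U - u⁺) ≥ 0`, hence
`c(ρ⁺) < U - u⁺` and `0 ≤ U - u⁻ < c(ρ⁻)`.
-/

open Set

theorem sub_lt_sub_of_hasDerivAt_lt {f g f' g' : ℝ → ℝ} {a b : ℝ} (hab : a < b)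
    (hf : ∀ x ∈ Icc a b, HasDerivAt f (f' x) x) (hg : ∀ x ∈ Icc a b, HasDerivAt g (g' x) x)
    (hlt : ∀ x ∈ Ioo a b, f' x < g' x) : f b - f a < g b - g a := by
  have hmono : StrictMonoOn (g - f) (Icc a b) := by
    refine strictMonoOn_of_deriv_pos (convex_Icc a b)
      (fun x hx => ((hg x hx).sub (hf x hx)).continuousAt.continuousWithinAt) fun x hx => ?_
    rw [interior_Icc] at hx
    rw [((hg x (Ioo_subset_Icc_self hx)).sub (hf x (Ioo_subset_Icc_self hx))).deriv]
    linarith [hlt x hx]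
  have := hmono (left_mem_Icc.2 hab.le) (right_mem_Icc.2 hab.le) hab
  simp only [Pi.sub_apply] at this
  linarith

theorem strictMonoOn_id_mul_of_deriv_pos {c c' : ℝ → ℝ}
    (hcd : ∀ ρ > (0:ℝ), HasDerivAt c (c' ρ) ρ) (hm : ∀ ρ > (0:ℝ), 0 < c ρ + ρ * c' ρ) :
    StrictMonoOn (fun ρ => ρ * c ρ) (Ioi 0) := by
  have hder : ∀ ρ > (0:ℝ), HasDerivAt (fun ρ => ρ * c ρ) (c ρ + ρ * c' ρ) ρ := fun ρ hρ =>
    ((hasDerivAt_id ρ).mul (hcd ρ hρ)).congr_deriv (by simp)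
  refine strictMonoOn_of_deriv_pos (convex_Ioi 0)
    (fun ρ hρ => (hder ρ hρ).continuousAt.continuousWithinAt) fun ρ hρ => ?_
  rw [interior_Ioi] at hρ
  rw [(hder ρ hρ).deriv]
  exact hm ρ hρ

theorem pressure_sub_mem_Ioo {p c : ℝ → ℝ} (hcpos : ∀ ρ > (0:ℝ), 0 < c ρ)
    (hp : ∀ ρ > (0:ℝ), HasDerivAt p (c ρ ^ 2) ρ) (hm : StrictMonoOn (fun ρ => ρ * c ρ) (Ioi 0))
    {a b : ℝ} (ha : 0 < a) (hab : a < b) :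
    p b - p a ∈ Ioo ((a * c a) ^ 2 * (a⁻¹ - b⁻¹)) ((b * c b) ^ 2 * (a⁻¹ - b⁻¹)) := by
  have hpos : ∀ x ∈ Icc a b, 0 < x := fun x hx => ha.trans_le hx.1
  have hp' : ∀ x ∈ Icc a b, HasDerivAt p (c x ^ 2) x := fun x hx => hp x (hpos x hx)
  have hinv : ∀ k, ∀ x ∈ Icc a b, HasDerivAt (fun ρ => -k * ρ⁻¹) (k / x ^ 2) x :=
    fun k x hx => by simpa [div_eq_mul_inv] using (hasDerivAt_inv (hpos x hx).ne').const_mul (-k)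
  have hsq : ∀ x > (0:ℝ), c x ^ 2 = (x * c x) ^ 2 / x ^ 2 := fun x hx => by field_simp
  have hmsq : ∀ {x y : ℝ}, 0 < x → x < y → (x * c x) ^ 2 < (y * c y) ^ 2 := fun hx hxy =>
    pow_lt_pow_left₀ (hm hx (hx.trans hxy : (0:ℝ) < _) hxy) (mul_pos hx (hcpos _ hx)).le two_ne_zero
  have hchord : ∀ k, -k * b⁻¹ - -k * a⁻¹ = k * (a⁻¹ - b⁻¹) := fun k => by ring
  constructor
  · rw [← hchord]
    refine sub_lt_sub_of_hasDerivAt_lt hab (hinv _) hp' fun x hx => ?_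
    have hx0 := ha.trans hx.1
    rw [hsq x hx0]
    exact div_lt_div_of_pos_right (hmsq ha hx.1) (by positivity)
  · rw [← hchord]
    refine sub_lt_sub_of_hasDerivAt_lt hab hp' (hinv _) fun x hx => ?_
    have hx0 := ha.trans hx.1
    rw [hsq x hx0]
    exact div_lt_div_of_pos_right (hmsq hx0 hx.2) (by positivity)

theorem sqrt_mul_div_mem_Ioo {P V a b : ℝ} (hV : 0 < V) (ha : 0 ≤ a) (hb : 0 ≤ b)
    (hP : P ∈ Ioo (a ^ 2 * V) (b ^ 2 * V)) : √(P * V) / V ∈ Ioo a b := by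
  have hsqrt : √(P * V) / V = √(P / V) := by
    rw [← Real.sqrt_sq hV.le, ← Real.sqrt_div' _ (sq_nonneg V), Real.sqrt_sq hV.le]
    congr 1
    field_simp
  have hPV : a ^ 2 < P / V := (lt_div_iff₀ hV).2 hP.1
  rw [hsqrt]
  constructor
  · exact (Real.lt_sqrt ha).2 hPV
  · exact (Real.sqrt_lt_sqrt ((sq_nonneg a).trans hPV.le) ((div_lt_iff₀ hV).2 hP.2)).trans_eq
      (Real.sqrt_sq hb)

theorem mul_shock_speed_sub_eq {ρm ρp um up U : ℝ} (hρm : ρm ≠ 0) (hρp : ρp ≠ 0) (hne : ρp ≠ ρm)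
    (hU : U = (ρp * up - ρm * um) / (ρp - ρm)) :
    ρm * (U - um) = (um - up) / (ρp⁻¹ - ρm⁻¹) ∧ ρp * (U - up) = (um - up) / (ρp⁻¹ - ρm⁻¹) := by
  have hsub : ρp - ρm ≠ 0 := sub_ne_zero.2 hne
  have hinv : ρp⁻¹ - ρm⁻¹ ≠ 0 := sub_ne_zero.2 (inv_injective.ne hne)
  subst hU
  constructor <;> field_simp <;> ring

/-- Lax entropy conditions for a 2-shock of a Bethe–Weyl gas (`p' = c² > 0`, `𝒢 > 0`):
the Rankine–Hugoniot conditions together with `ρ⁻ > ρ⁺` imply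
`λ₁(ρ⁻,u⁻) < U < λ₂(ρ⁻,u⁻)` and `U ≥ λ₂(ρ⁺,u⁺)`, where `λ₁ = u − c`, `λ₂ = u + c`. -/
theorem lax_entropy_conditions (p c c' : ℝ → ℝ)
    (hcpos : ∀ ρ > (0:ℝ), 0 < c ρ)
    (hcd : ∀ ρ > (0:ℝ), HasDerivAt c (c' ρ) ρ)
    (hp : ∀ ρ > (0:ℝ), HasDerivAt p ((c ρ) ^ 2) ρ)
    (hG : ∀ ρ > (0:ℝ), 0 < (c ρ + ρ * c' ρ) / c ρ)
    (ρm ρp um up U : ℝ) (hρp : 0 < ρp) (hρ : ρp < ρm)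
    (hU : U = (ρp * up - ρm * um) / (ρp - ρm))
    (hu : um - up = Real.sqrt ((p ρm - p ρp) * (1 / ρp - 1 / ρm))) :
    um - c ρm < U ∧ U < um + c ρm ∧ U ≥ up + c ρp := by
  have hρm : 0 < ρm := hρp.trans hρ
  have hmp : 0 < ρp * c ρp := mul_pos hρp (hcpos ρp hρp)
  have hΔv : 0 < ρp⁻¹ - ρm⁻¹ := sub_pos.2 (inv_strictAnti₀ hρp hρ)
  have hm := strictMonoOn_id_mul_of_deriv_pos hcd fun ρ hρ =>
    (div_pos_iff_of_pos_right (hcpos ρ hρ)).1 (hG ρ hρ)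
  have hΔp := pressure_sub_mem_Ioo hcpos hp hm hρp hρ
  obtain ⟨hjm, hjp⟩ := mul_shock_speed_sub_eq hρm.ne' hρp.ne' hρ.ne hU
  simp only [one_div] at hu
  rw [hu] at hjm hjp
  obtain ⟨hjlo, hjhi⟩ :=
    sqrt_mul_div_mem_Ioo hΔv hmp.le (mul_pos hρm (hcpos ρm hρm)).le hΔp
  have hUm : 0 ≤ U - um := nonneg_of_mul_nonneg_right (hjm ▸ (hmp.trans hjlo).le) hρm
  refine ⟨?_, ?_, ?_⟩
  · linarith [hcpos ρm hρm]
  · linarith [lt_of_mul_lt_mul_left (hjm ▸ hjhi) hρm.le]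
  · linarith [lt_of_mul_lt_mul_left (hjp ▸ hjlo) hρp.le]
end

section
/- Define ℱ(w₁⁻, w₂⁻, w₁⁺, w₂⁺) = u⁻ − u⁺ − √(F(ρ⁻, ρ⁺)), where u = (w₁+w₂)/2, ρ = H⁻¹((w₂−w₁)/2) with H strictly increasing, and F(ρ⁻,ρ⁺) = (1/ρ⁺ − 1/ρ⁻)(p(ρ⁻) − p(ρ⁺)). Then on the set where ρ⁻ > ρ⁺, the partial derivative ∂ℱ/∂w₁⁻ = (1/(4√F))·(√(ρ⁻c⁻(1/ρ⁺ − 1/ρ⁻)) + √((p⁻−p⁺)/(ρ⁻c⁻)))² > 0. -/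
/-!
Since `Hinv` has derivative `ρ / c` at `H ρ`, moving `w₁⁻` moves `ρ⁻` at rate `-ρ⁻ / (2 c⁻)`.
Writing `a = 1/ρ⁺ - 1/ρ⁻`, `b = p(ρ⁻) - p(ρ⁺)` and `k = ρ⁻ c⁻`, the chain rule gives
`∂ℱ/∂w₁⁻ = 1/2 + (k a + b / k) / (4 √(a b))`. Because `√(k a) · √(b / k) = √(a b)`, the numerator
`2 √(a b) + k a + b / k` is the square `(√(k a) + √(b / k))²`. Both `a` and `b` are positive,
the latter because `p' = c² > 0`, so the derivative is at least `1/2`.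
-/
open Set

lemma strictMonoOn_Ioi_of_hasDerivAt_pos {f f' : ℝ → ℝ} {a : ℝ}
    (hf : ∀ x > a, HasDerivAt f (f' x) x) (hf' : ∀ x > a, 0 < f' x) :
    StrictMonoOn f (Ioi a) :=
  strictMonoOn_of_hasDerivWithinAt_pos (convex_Ioi a)
    (fun x hx => (hf x hx).continuousAt.continuousWithinAt)
    (fun x hx => (hf x (interior_subset hx)).hasDerivWithinAt)
    (fun x hx => hf' x (interior_subset hx))

lemma hasDerivAt_hugoniot {p : ℝ → ℝ} {p' r : ℝ} (ρ₀ : ℝ) (hr : r ≠ 0) (hp : HasDerivAt p p' r) :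
    HasDerivAt (fun ρ => (1 / ρ₀ - 1 / ρ) * (p ρ - p ρ₀))
      ((p r - p ρ₀) / r ^ 2 + (1 / ρ₀ - 1 / r) * p') r := by
  have hinv : HasDerivAt (fun ρ => 1 / ρ₀ - 1 / ρ) (1 / r ^ 2) r := by
    simpa [one_div] using (hasDerivAt_inv hr).const_sub ρ₀⁻¹
  exact (hinv.mul (hp.sub_const (p ρ₀))).congr_deriv (by ring)

lemma one_div_mul_sq_sqrt_mul_add_sqrt_div {k a b : ℝ} (hk : 0 < k) (ha : 0 < a) (hb : 0 < b) :
    1 / (4 * √(a * b)) * (√(k * a) + √(b / k)) ^ 2 = 1 / 2 + (k * a + b / k) / (4 * √(a * b)) := by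
  have hcross : √(k * a) * √(b / k) = √(a * b) := by
    rw [← Real.sqrt_mul (by positivity)]
    congr 1
    field_simp
  rw [add_sq, Real.sq_sqrt (by positivity), Real.sq_sqrt (by positivity), mul_assoc, hcross]
  field_simp
  ring

theorem dF_dw1m_pos_general (p c H Hinv : ℝ → ℝ)
    (hcpos : ∀ ρ > (0:ℝ), 0 < c ρ)
    (hp : ∀ ρ > (0:ℝ), HasDerivAt p ((c ρ) ^ 2) ρ)
    (hHinv : ∀ ρ > (0:ℝ), Hinv (H ρ) = ρ)
    (hHinv' : ∀ ρ > (0:ℝ), HasDerivAt Hinv (ρ / c ρ) (H ρ))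
    (w1m w2m w1p w2p ρm ρp : ℝ)
    (hρp : 0 < ρp) (hρ : ρp < ρm)
    (hm : H ρm = (w2m - w1m) / 2) (hpp : H ρp = (w2p - w1p) / 2)
    (F : ℝ) (hF : F = (1 / ρp - 1 / ρm) * (p ρm - p ρp)) :
    HasDerivAt
      (fun x => (x + w2m) / 2 - (w1p + w2p) / 2 -
        Real.sqrt ((1 / Hinv ((w2p - w1p) / 2) - 1 / Hinv ((w2m - x) / 2)) *
          (p (Hinv ((w2m - x) / 2)) - p (Hinv ((w2p - w1p) / 2)))))
      (1 / (4 * Real.sqrt F) *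
        (Real.sqrt (ρm * c ρm * (1 / ρp - 1 / ρm)) +
          Real.sqrt ((p ρm - p ρp) / (ρm * c ρm))) ^ 2) w1m ∧
    0 < 1 / (4 * Real.sqrt F) *
        (Real.sqrt (ρm * c ρm * (1 / ρp - 1 / ρm)) +
          Real.sqrt ((p ρm - p ρp) / (ρm * c ρm))) ^ 2 := by
  subst hF
  have hρm : 0 < ρm := hρp.trans hρ
  have hk : 0 < ρm * c ρm := mul_pos hρm (hcpos ρm hρm)
  have ha : 0 < 1 / ρp - 1 / ρm := sub_pos.mpr (one_div_lt_one_div_of_lt hρp hρ)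
  have hb : 0 < p ρm - p ρp := sub_pos.mpr <|
    strictMonoOn_Ioi_of_hasDerivAt_pos hp (fun ρ hρ => pow_pos (hcpos ρ hρ) 2) hρp hρm hρ
  have hHinv_m : Hinv ((w2m - w1m) / 2) = ρm := hm ▸ hHinv ρm hρm
  have hHinv_p : Hinv ((w2p - w1p) / 2) = ρp := hpp ▸ hHinv ρp hρp
  have hdensity : HasDerivAt (fun x => Hinv ((w2m - x) / 2)) (-(ρm / c ρm) / 2) w1m :=
    ((hm ▸ hHinv' ρm hρm).comp w1m
      (((hasDerivAt_id w1m).const_sub w2m).div_const 2)).congr_deriv (by ring)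
  have hsqrtF := ((hasDerivAt_hugoniot ρp hρm.ne' (hp ρm hρm)).comp_of_eq w1m hdensity
    hHinv_m.symm).sqrt (by simpa only [Function.comp, hHinv_m] using (mul_pos ha hb).ne')
  have hderiv := ((((hasDerivAt_id w1m).add_const w2m).div_const 2).sub_const
    ((w1p + w2p) / 2)).sub hsqrtF
  rw [one_div_mul_sq_sqrt_mul_add_sqrt_div hk ha hb]
  refine ⟨?_, by positivity⟩
  rw [hHinv_p]
  refine hderiv.congr_deriv ?_
  simp only [Function.comp, hHinv_m]
  field_simp
  ring

/-- Strict positivity of `∂ℱ/∂w₁⁻` for the Rankine–Hugoniot compatibility function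
`ℱ = u⁻ − u⁺ − √(F(ρ⁻,ρ⁺))`, expressed in the Riemann invariants
`u = (w₁+w₂)/2`, `ρ = H⁻¹((w₂−w₁)/2)`, on the set where `ρ⁻ > ρ⁺`. -/
theorem dF_dw1m_pos (p c H Hinv : ℝ → ℝ)
    (hcpos : ∀ ρ > (0:ℝ), 0 < c ρ)
    (hp : ∀ ρ > (0:ℝ), HasDerivAt p ((c ρ) ^ 2) ρ)
    (hHd : ∀ ρ > (0:ℝ), HasDerivAt H (c ρ / ρ) ρ)
    (hHinv : ∀ ρ > (0:ℝ), Hinv (H ρ) = ρ)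
    (hHinv' : ∀ ρ > (0:ℝ), HasDerivAt Hinv (ρ / c ρ) (H ρ))
    (w1m w2m w1p w2p ρm ρp : ℝ)
    (hρp : 0 < ρp) (hρ : ρp < ρm)
    (hm : H ρm = (w2m - w1m) / 2) (hpp : H ρp = (w2p - w1p) / 2)
    (F : ℝ) (hF : F = (1 / ρp - 1 / ρm) * (p ρm - p ρp)) :
    HasDerivAt
      (fun x => (x + w2m) / 2 - (w1p + w2p) / 2 -
        Real.sqrt ((1 / Hinv ((w2p - w1p) / 2) - 1 / Hinv ((w2m - x) / 2)) *
          (p (Hinv ((w2m - x) / 2)) - p (Hinv ((w2p - w1p) / 2)))))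
      (1 / (4 * Real.sqrt F) *
        (Real.sqrt (ρm * c ρm * (1 / ρp - 1 / ρm)) +
          Real.sqrt ((p ρm - p ρp) / (ρm * c ρm))) ^ 2) w1m ∧
    0 < 1 / (4 * Real.sqrt F) *
        (Real.sqrt (ρm * c ρm * (1 / ρp - 1 / ρm)) +
          Real.sqrt ((p ρm - p ρp) / (ρm * c ρm))) ^ 2 :=
  dF_dw1m_pos_general p c H Hinv hcpos hp hHinv hHinv' w1m w2m w1p w2p ρm ρp hρp hρ hm hpp F hF
end

section
/- With ℱ defined as above, on the set where ρ⁻ > ρ⁺ one has ∂ℱ/∂w₂⁻ ≤ 0, ∂ℱ/∂w₁⁺ ≤ 0, and ∂ℱ/∂w₂⁺ ≥ 0. Explicitly, ∂ℱ/∂w₂⁻ = −(1/(4√F))·(√(ρ⁻c⁻(1/ρ⁺−1/ρ⁻)) − √((p⁻−p⁺)/(ρ⁻c⁻)))², ∂ℱ/∂w₁⁺ = −(1/(4√F))·(√(ρ⁺c⁺(1/ρ⁺−1/ρ⁻)) + √((p⁻−p⁺)/(ρ⁺c⁺)))², and ∂ℱ/∂w₂⁺ = (1/(4√F))·(√(ρ⁺c⁺(1/ρ⁺−1/ρ⁻))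 − √((p⁻−p⁺)/(ρ⁺c⁺)))². -/
/-!
Let `A` and `B` be the two radicands of the formula, so that `A * B = F`. Since
`dρ/dw = ± ρ / (2c)` along a Riemann invariant and `p' = c²`, the chain rule turns `∂F/∂ρ`
into `± (A + B) / 2`, hence `∂√F/∂w = ± (A + B) / (4√F)`. Adding the contribution `± 1/2` of
`u⁻ − u⁺` and using `(√A ∓ √B)² = A + B ∓ 2√F` writes each partial derivative of `ℱ` as
`± (√A ∓ √B)² / (4√F)`.
-/

open Real Set

theorem sqrt_sub_sqrt_sq {A B : ℝ} (hA : 0 ≤ A) (hB : 0 ≤ B) :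
    (√A - √B) ^ 2 = A + B - 2 * √(A * B) := by
  rw [sub_sq, sq_sqrt hA, sq_sqrt hB, sqrt_mul hA]
  ring

theorem sqrt_add_sqrt_sq {A B : ℝ} (hA : 0 ≤ A) (hB : 0 ≤ B) :
    (√A + √B) ^ 2 = A + B + 2 * √(A * B) := by
  rw [add_sq, sq_sqrt hA, sq_sqrt hB, sqrt_mul hA]
  ring

theorem strictMonoOn_Ioi_of_hasDerivAt_sq {p c : ℝ → ℝ} (hc : ∀ ρ > (0:ℝ), 0 < c ρ)
    (hp : ∀ ρ > (0:ℝ), HasDerivAt p (c ρ ^ 2) ρ) : StrictMonoOn p (Ioi 0) := by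
  refine strictMonoOn_of_hasDerivWithinAt_pos (f' := fun ρ => c ρ ^ 2) (convex_Ioi 0)
    (fun x hx => (hp x hx).continuousAt.continuousWithinAt) (fun x hx => ?_) (fun x hx => ?_)
  · rw [interior_Ioi] at hx ⊢
    exact (hp x hx).hasDerivWithinAt
  · rw [interior_Ioi] at hx
    exact pow_pos (hc x hx) 2

/-- `hugoniot p ρ⁻ ρ⁺` is `F(ρ⁻, ρ⁺)`. -/
noncomputable def hugoniot (p : ℝ → ℝ) (a b : ℝ) : ℝ := (1 / b - 1 / a) * (p a - p b)

section Hugoniot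

variable {p : ℝ → ℝ}

theorem hugoniot_comm (a b : ℝ) : hugoniot p a b = hugoniot p b a := by
  unfold hugoniot
  ring

theorem hugoniot_pos {a b : ℝ} (hb : 0 < b) (hba : b < a) (hp : p b < p a) :
    0 < hugoniot p a b :=
  mul_pos (sub_pos.2 (one_div_lt_one_div_of_lt hb hba)) (sub_pos.2 hp)

theorem hugoniot_eq_mul_div (a b : ℝ) {m : ℝ} (hm : m ≠ 0) :
    hugoniot p a b = m * (1 / b - 1 / a) * ((p a - p b) / m) := by
  unfold hugoniot
  field_simp

/-- `g` plays `ρ` along a Riemann invariant (`σ = ±1`), with sound speed `k` at `ρ = a`. -/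
theorem hasDerivAt_hugoniot_comp_left {g : ℝ → ℝ} {a b k σ y : ℝ} (ha : a ≠ 0) (hk : k ≠ 0)
    (hg : HasDerivAt g (σ * (a / k) / 2) y) (hga : g y = a) (hp : HasDerivAt p (k ^ 2) a) :
    HasDerivAt (fun y => hugoniot p (g y) b)
      (σ / 2 * (a * k * (1 / b - 1 / a) + (p a - p b) / (a * k))) y := by
  unfold hugoniot
  have hinv := (hg.fun_inv (hga ▸ ha)).const_sub (1 / b)
  have hpg := ((hga ▸ hp).comp y hg).sub_const (p b)
  simp only [one_div] at hinv ⊢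
  refine (hinv.mul hpg).congr_deriv ?_
  rw [Function.comp_apply, hga]
  field_simp
  ring

theorem hasDerivAt_hugoniot_comp_right {g : ℝ → ℝ} {a b k σ y : ℝ} (ha : a ≠ 0) (hk : k ≠ 0)
    (hg : HasDerivAt g (σ * (a / k) / 2) y) (hga : g y = a) (hp : HasDerivAt p (k ^ 2) a) :
    HasDerivAt (fun y => hugoniot p b (g y))
      (-σ / 2 * (a * k * (1 / a - 1 / b) + (p b - p a) / (a * k))) y := by
  simp only [hugoniot_comm b]
  convert hasDerivAt_hugoniot_comp_left (b := b) ha hk hg hga hp using 1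
  ring

end Hugoniot

/-- `ℱ` in the Riemann invariants, via `u = (w₁ + w₂) / 2` and `ρ = H⁻¹((w₂ − w₁) / 2)`. -/
noncomputable def compatibility (p Hinv : ℝ → ℝ) (w1m w2m w1p w2p : ℝ) : ℝ :=
  (w1m + w2m) / 2 - (w1p + w2p) / 2 -
    √(hugoniot p (Hinv ((w2m - w1m) / 2)) (Hinv ((w2p - w1p) / 2)))

section Compatibility

variable {p Hinv : ℝ → ℝ} {w1m w2m w1p w2p ρm ρp : ℝ}

theorem hasDerivAt_compatibility_w2m {cm : ℝ} (hcm : 0 < cm) (hρp : 0 < ρp) (hρ : ρp < ρm)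
    (hpρ : p ρp < p ρm) (hHm : Hinv ((w2m - w1m) / 2) = ρm) (hHp : Hinv ((w2p - w1p) / 2) = ρp)
    (hHinv' : HasDerivAt Hinv (ρm / cm) ((w2m - w1m) / 2)) (hp : HasDerivAt p (cm ^ 2) ρm) :
    HasDerivAt (fun y => compatibility p Hinv w1m y w1p w2p)
      (-(1 / (4 * √(hugoniot p ρm ρp))) *
        (√(ρm * cm * (1 / ρp - 1 / ρm)) - √((p ρm - p ρp) / (ρm * cm))) ^ 2) w2m := by
  have hρm : 0 < ρm := hρp.trans hρ
  have hFpos := hugoniot_pos hρp hρ hpρ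
  have hA : 0 ≤ ρm * cm * (1 / ρp - 1 / ρm) :=
    mul_nonneg (by positivity) (sub_nonneg.2 (one_div_le_one_div_of_le hρp hρ.le))
  have hB : 0 ≤ (p ρm - p ρp) / (ρm * cm) := div_nonneg (sub_nonneg.2 hpρ.le) (by positivity)
  have hg : HasDerivAt (fun y => Hinv ((y - w1m) / 2)) (1 * (ρm / cm) / 2) w2m :=
    (hHinv'.comp w2m (((hasDerivAt_id' w2m).sub_const w1m).div_const 2)).congr_deriv (by ring)
  have hsqrt := (hasDerivAt_hugoniot_comp_left (b := Hinv ((w2p - w1p) / 2)) hρm.ne' hcm.ne'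
    hg hHm hp).sqrt (by rw [hHm, hHp]; exact hFpos.ne')
  have hu : HasDerivAt (fun y => (w1m + y) / 2 - (w1p + w2p) / 2) (1 / 2) w2m :=
    (((hasDerivAt_id' w2m).const_add w1m).div_const 2).sub_const _
  refine (hu.sub hsqrt).congr_deriv ?_
  rw [hHm, hHp, sqrt_sub_sqrt_sq hA hB, ← hugoniot_eq_mul_div ρm ρp (by positivity)]
  field_simp
  ring

theorem hasDerivAt_compatibility_w1p {cp : ℝ} (hcp : 0 < cp) (hρp : 0 < ρp) (hρ : ρp < ρm)
    (hpρ : p ρp < p ρm) (hHm : Hinv ((w2m - w1m) / 2) = ρm) (hHp : Hinv ((w2p - w1p) / 2) = ρp)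
    (hHinv' : HasDerivAt Hinv (ρp / cp) ((w2p - w1p) / 2)) (hp : HasDerivAt p (cp ^ 2) ρp) :
    HasDerivAt (fun x => compatibility p Hinv w1m w2m x w2p)
      (-(1 / (4 * √(hugoniot p ρm ρp))) *
        (√(ρp * cp * (1 / ρp - 1 / ρm)) + √((p ρm - p ρp) / (ρp * cp))) ^ 2) w1p := by
  have hFpos := hugoniot_pos hρp hρ hpρ
  have hA : 0 ≤ ρp * cp * (1 / ρp - 1 / ρm) :=
    mul_nonneg (by positivity) (sub_nonneg.2 (one_div_le_one_div_of_le hρp hρ.le))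
  have hB : 0 ≤ (p ρm - p ρp) / (ρp * cp) := div_nonneg (sub_nonneg.2 hpρ.le) (by positivity)
  have hg : HasDerivAt (fun x => Hinv ((w2p - x) / 2)) (-1 * (ρp / cp) / 2) w1p :=
    (hHinv'.comp w1p (((hasDerivAt_id' w1p).const_sub w2p).div_const 2)).congr_deriv (by ring)
  have hsqrt := (hasDerivAt_hugoniot_comp_right (b := Hinv ((w2m - w1m) / 2))
    hρp.ne' hcp.ne' hg hHp hp).sqrt (by rw [hHm, hHp]; exact hFpos.ne')
  have hu : HasDerivAt (fun x => (w1m + w2m) / 2 - (x + w2p) / 2) (-(1 / 2)) w1p :=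
    (((hasDerivAt_id' w1p).add_const w2p).div_const 2).const_sub _
  refine (hu.sub hsqrt).congr_deriv ?_
  rw [hHm, hHp, sqrt_add_sqrt_sq hA hB, ← hugoniot_eq_mul_div ρm ρp (by positivity)]
  field_simp
  ring

theorem hasDerivAt_compatibility_w2p {cp : ℝ} (hcp : 0 < cp) (hρp : 0 < ρp) (hρ : ρp < ρm)
    (hpρ : p ρp < p ρm) (hHm : Hinv ((w2m - w1m) / 2) = ρm) (hHp : Hinv ((w2p - w1p) / 2) = ρp)
    (hHinv' : HasDerivAt Hinv (ρp / cp) ((w2p - w1p) / 2)) (hp : HasDerivAt p (cp ^ 2) ρp) :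
    HasDerivAt (fun y => compatibility p Hinv w1m w2m w1p y)
      (1 / (4 * √(hugoniot p ρm ρp)) *
        (√(ρp * cp * (1 / ρp - 1 / ρm)) - √((p ρm - p ρp) / (ρp * cp))) ^ 2) w2p := by
  have hFpos := hugoniot_pos hρp hρ hpρ
  have hA : 0 ≤ ρp * cp * (1 / ρp - 1 / ρm) :=
    mul_nonneg (by positivity) (sub_nonneg.2 (one_div_le_one_div_of_le hρp hρ.le))
  have hB : 0 ≤ (p ρm - p ρp) / (ρp * cp) := div_nonneg (sub_nonneg.2 hpρ.le) (by positivity)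
  have hg : HasDerivAt (fun y => Hinv ((y - w1p) / 2)) (1 * (ρp / cp) / 2) w2p :=
    (hHinv'.comp w2p (((hasDerivAt_id' w2p).sub_const w1p).div_const 2)).congr_deriv (by ring)
  have hsqrt := (hasDerivAt_hugoniot_comp_right (b := Hinv ((w2m - w1m) / 2))
    hρp.ne' hcp.ne' hg hHp hp).sqrt (by rw [hHm, hHp]; exact hFpos.ne')
  have hu : HasDerivAt (fun y => (w1m + w2m) / 2 - (w1p + y) / 2) (-(1 / 2)) w2p :=
    (((hasDerivAt_id' w2p).const_add w1p).div_const 2).const_sub _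
  refine (hu.sub hsqrt).congr_deriv ?_
  rw [hHm, hHp, sqrt_sub_sqrt_sq hA hB, ← hugoniot_eq_mul_div ρm ρp (by positivity)]
  field_simp
  ring

end Compatibility

theorem dF_signs_general (p c H Hinv : ℝ → ℝ)
    (hcpos : ∀ ρ > (0:ℝ), 0 < c ρ)
    (hp : ∀ ρ > (0:ℝ), HasDerivAt p ((c ρ) ^ 2) ρ)
    (hHinv : ∀ ρ > (0:ℝ), Hinv (H ρ) = ρ)
    (hHinv' : ∀ ρ > (0:ℝ), HasDerivAt Hinv (ρ / c ρ) (H ρ))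
    (w1m w2m w1p w2p ρm ρp : ℝ)
    (hρp : 0 < ρp) (hρ : ρp < ρm)
    (hm : H ρm = (w2m - w1m) / 2) (hpp : H ρp = (w2p - w1p) / 2)
    (F : ℝ) (hF : F = (1 / ρp - 1 / ρm) * (p ρm - p ρp)) :
    (HasDerivAt
      (fun y => (w1m + y) / 2 - (w1p + w2p) / 2 -
        Real.sqrt ((1 / Hinv ((w2p - w1p) / 2) - 1 / Hinv ((y - w1m) / 2)) *
          (p (Hinv ((y - w1m) / 2)) - p (Hinv ((w2p - w1p) / 2)))))
      (-(1 / (4 * Real.sqrt F)) *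
        (Real.sqrt (ρm * c ρm * (1 / ρp - 1 / ρm)) -
          Real.sqrt ((p ρm - p ρp) / (ρm * c ρm))) ^ 2) w2m ∧
      -(1 / (4 * Real.sqrt F)) *
        (Real.sqrt (ρm * c ρm * (1 / ρp - 1 / ρm)) -
          Real.sqrt ((p ρm - p ρp) / (ρm * c ρm))) ^ 2 ≤ 0) ∧
    (HasDerivAt
      (fun x => (w1m + w2m) / 2 - (x + w2p) / 2 -
        Real.sqrt ((1 / Hinv ((w2p - x) / 2) - 1 / Hinv ((w2m - w1m) / 2)) *
          (p (Hinv ((w2m - w1m) / 2)) - p (Hinv ((w2p - x) / 2)))))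
      (-(1 / (4 * Real.sqrt F)) *
        (Real.sqrt (ρp * c ρp * (1 / ρp - 1 / ρm)) +
          Real.sqrt ((p ρm - p ρp) / (ρp * c ρp))) ^ 2) w1p ∧
      -(1 / (4 * Real.sqrt F)) *
        (Real.sqrt (ρp * c ρp * (1 / ρp - 1 / ρm)) +
          Real.sqrt ((p ρm - p ρp) / (ρp * c ρp))) ^ 2 ≤ 0) ∧
    (HasDerivAt
      (fun y => (w1m + w2m) / 2 - (w1p + y) / 2 -
        Real.sqrt ((1 / Hinv ((y - w1p) / 2) - 1 / Hinv ((w2m - w1m) / 2)) *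
          (p (Hinv ((w2m - w1m) / 2)) - p (Hinv ((y - w1p) / 2)))))
      (1 / (4 * Real.sqrt F) *
        (Real.sqrt (ρp * c ρp * (1 / ρp - 1 / ρm)) -
          Real.sqrt ((p ρm - p ρp) / (ρp * c ρp))) ^ 2) w2p ∧
      0 ≤ 1 / (4 * Real.sqrt F) *
        (Real.sqrt (ρp * c ρp * (1 / ρp - 1 / ρm)) -
          Real.sqrt ((p ρm - p ρp) / (ρp * c ρp))) ^ 2) := by
  have hρm : 0 < ρm := hρp.trans hρ
  have hpρ : p ρp < p ρm := strictMonoOn_Ioi_of_hasDerivAt_sq hcpos hp hρp hρm hρ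
  have hHm : Hinv ((w2m - w1m) / 2) = ρm := hm ▸ hHinv ρm hρm
  have hHp : Hinv ((w2p - w1p) / 2) = ρp := hpp ▸ hHinv ρp hρp
  have hHm' : HasDerivAt Hinv (ρm / c ρm) ((w2m - w1m) / 2) := hm ▸ hHinv' ρm hρm
  have hHp' : HasDerivAt Hinv (ρp / c ρp) ((w2p - w1p) / 2) := hpp ▸ hHinv' ρp hρp
  have hcm := hcpos ρm hρm
  have hcp := hcpos ρp hρp
  subst hF
  refine ⟨⟨hasDerivAt_compatibility_w2m hcm hρp hρ hpρ hHm hHp hHm' (hp ρm hρm), ?_⟩,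
    ⟨hasDerivAt_compatibility_w1p hcp hρp hρ hpρ hHm hHp hHp' (hp ρp hρp), ?_⟩,
    hasDerivAt_compatibility_w2p hcp hρp hρ hpρ hHm hHp hHp' (hp ρp hρp), by positivity⟩
  all_goals
    rw [neg_mul, neg_nonpos]
    positivity

/-- Signs of the partial derivatives `∂ℱ/∂w₂⁻ ≤ 0`, `∂ℱ/∂w₁⁺ ≤ 0`, `∂ℱ/∂w₂⁺ ≥ 0`
(with their explicit expressions) of the Rankine–Hugoniot compatibility function
`ℱ = u⁻ − u⁺ − √(F(ρ⁻,ρ⁺))` in the Riemann invariants, where `ρ⁻ > ρ⁺`. -/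
theorem dF_signs (p c H Hinv : ℝ → ℝ)
    (hcpos : ∀ ρ > (0:ℝ), 0 < c ρ)
    (hp : ∀ ρ > (0:ℝ), HasDerivAt p ((c ρ) ^ 2) ρ)
    (hHd : ∀ ρ > (0:ℝ), HasDerivAt H (c ρ / ρ) ρ)
    (hHinv : ∀ ρ > (0:ℝ), Hinv (H ρ) = ρ)
    (hHinv' : ∀ ρ > (0:ℝ), HasDerivAt Hinv (ρ / c ρ) (H ρ))
    (w1m w2m w1p w2p ρm ρp : ℝ)
    (hρp : 0 < ρp) (hρ : ρp < ρm)
    (hm : H ρm = (w2m - w1m) / 2) (hpp : H ρp = (w2p - w1p) / 2)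
    (F : ℝ) (hF : F = (1 / ρp - 1 / ρm) * (p ρm - p ρp)) :
    (HasDerivAt
      (fun y => (w1m + y) / 2 - (w1p + w2p) / 2 -
        Real.sqrt ((1 / Hinv ((w2p - w1p) / 2) - 1 / Hinv ((y - w1m) / 2)) *
          (p (Hinv ((y - w1m) / 2)) - p (Hinv ((w2p - w1p) / 2)))))
      (-(1 / (4 * Real.sqrt F)) *
        (Real.sqrt (ρm * c ρm * (1 / ρp - 1 / ρm)) -
          Real.sqrt ((p ρm - p ρp) / (ρm * c ρm))) ^ 2) w2m ∧
      -(1 / (4 * Real.sqrt F)) *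
        (Real.sqrt (ρm * c ρm * (1 / ρp - 1 / ρm)) -
          Real.sqrt ((p ρm - p ρp) / (ρm * c ρm))) ^ 2 ≤ 0) ∧
    (HasDerivAt
      (fun x => (w1m + w2m) / 2 - (x + w2p) / 2 -
        Real.sqrt ((1 / Hinv ((w2p - x) / 2) - 1 / Hinv ((w2m - w1m) / 2)) *
          (p (Hinv ((w2m - w1m) / 2)) - p (Hinv ((w2p - x) / 2)))))
      (-(1 / (4 * Real.sqrt F)) *
        (Real.sqrt (ρp * c ρp * (1 / ρp - 1 / ρm)) +
          Real.sqrt ((p ρm - p ρp) / (ρp * c ρp))) ^ 2) w1p ∧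
      -(1 / (4 * Real.sqrt F)) *
        (Real.sqrt (ρp * c ρp * (1 / ρp - 1 / ρm)) +
          Real.sqrt ((p ρm - p ρp) / (ρp * c ρp))) ^ 2 ≤ 0) ∧
    (HasDerivAt
      (fun y => (w1m + w2m) / 2 - (w1p + y) / 2 -
        Real.sqrt ((1 / Hinv ((y - w1p) / 2) - 1 / Hinv ((w2m - w1m) / 2)) *
          (p (Hinv ((w2m - w1m) / 2)) - p (Hinv ((y - w1p) / 2)))))
      (1 / (4 * Real.sqrt F) *
        (Real.sqrt (ρp * c ρp * (1 / ρp - 1 / ρm)) -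
          Real.sqrt ((p ρm - p ρp) / (ρp * c ρp))) ^ 2) w2p ∧
      0 ≤ 1 / (4 * Real.sqrt F) *
        (Real.sqrt (ρp * c ρp * (1 / ρp - 1 / ρm)) -
          Real.sqrt ((p ρm - p ρp) / (ρp * c ρp))) ^ 2) :=
  dF_signs_general p c H Hinv hcpos hp hHinv hHinv' w1m w2m w1p w2p ρm ρp hρp hρ hm hpp F hF
end

section
/- For a Van der Waals gas with constant heat capacity, where c(ρ) = (1/(1−bρ))·√(γ₀(γ₀−1))·(ρ/(1−bρ))^((γ₀−1)/2) for 0 < ρ < 1/b with b > 0 and γ₀ > 1, the function H(ρ) = ∫₀^ρ c(s)/s ds equals 2√(γ₀/(γ₀−1))·(ρ/(1−bρ))^((γ₀−1)/2), and consequently c(ρ) = ((γ₀−1)/2)·(1 + b̃ H(ρ)^(ν−1))·H(ρ), where ν = (γ₀+1)/(γ₀−1) and b̃ = b·((γ₀−1)/(4γ₀))^(1/(γ₀−1)). -/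
/-!
With `u = ρ / (1 - bρ)` and `α = (γ - 1) / 2` one has `u' = 1 / (1 - bρ)²` and `u / ρ = 1 / (1 - bρ)`,
so `c(ρ) / ρ = √(γ(γ - 1)) u^(α - 1) u'` is the derivative of `2√(γ / (γ - 1)) u^α`, which vanishes
at `ρ = 0`; being nonnegative, the integrand is integrable up to `0` and the fundamental theorem of
calculus gives `H`. Then `H^(1/α)` is a constant multiple of `u`, namely `b̃ H^(ν - 1) = b u`, and
`1 + b u = 1 / (1 - bρ)` turns the formula for `c` into the one in terms of `H`.
-/

open Set MeasureTheory

theorem Real.sqrt_mul_eq_mul_sqrt_div (x : ℝ) {a : ℝ} (ha : 0 ≤ a) : √(x * a) = a * √(x / a) := by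
  rcases ha.eq_or_lt with rfl | ha
  · simp
  rw [show x * a = a ^ 2 * (x / a) by field_simp, Real.sqrt_mul (sq_nonneg a), Real.sqrt_sq ha.le]

theorem Real.div_rpow_div_self {s d : ℝ} (α : ℝ) (hs : s ≠ 0) (hd : d ≠ 0) :
    (s / d) ^ α / s = (s / d) ^ (α - 1) / d := by
  rw [Real.rpow_sub_one (div_ne_zero hs hd)]
  field_simp

section VanDerWaals

variable {b : ℝ}

theorem hasDerivAt_div_one_sub_mul_rpow (α : ℝ) {s : ℝ} (hs : s ≠ 0) (hbs : 1 - b * s ≠ 0) :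
    HasDerivAt (fun s => (s / (1 - b * s)) ^ α)
      (α * (s / (1 - b * s)) ^ (α - 1) / (1 - b * s) ^ 2) s := by
  have hden : HasDerivAt (fun s : ℝ => 1 - b * s) (-b) s := by
    simpa using ((hasDerivAt_id s).const_mul b).const_sub 1
  refine (((hasDerivAt_id' s).div hden hbs).rpow_const (p := α)
    (Or.inl (div_ne_zero hs hbs))).congr_deriv ?_
  simp only [Pi.div_apply]
  field_simp
  ring

theorem integral_Ioc_div_one_sub_mul_rpow {α ρ : ℝ} (hα : 0 < α) (hb : 0 ≤ b) (hρ : 0 ≤ ρ)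
    (hbρ : b * ρ < 1) :
    ∫ s in Ioc 0 ρ, α * (s / (1 - b * s)) ^ (α - 1) / (1 - b * s) ^ 2 =
      (ρ / (1 - b * ρ)) ^ α := by
  have hden : ∀ s ≤ ρ, 0 < 1 - b * s := fun s hs => by nlinarith
  have hcont : ContinuousOn (fun s => (s / (1 - b * s)) ^ α) (Icc 0 ρ) :=
    (continuousOn_id.div (by fun_prop) fun s hs => (hden s hs.2).ne').rpow_const
      fun _ _ => Or.inr hα.le
  have hderiv : ∀ s ∈ Ioo 0 ρ, HasDerivAt (fun s => (s / (1 - b * s)) ^ α)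
      (α * (s / (1 - b * s)) ^ (α - 1) / (1 - b * s) ^ 2) s := fun s hs =>
    hasDerivAt_div_one_sub_mul_rpow α hs.1.ne' (hden s hs.2.le).ne'
  have hnonneg : ∀ s ∈ Ioo 0 ρ, 0 ≤ α * (s / (1 - b * s)) ^ (α - 1) / (1 - b * s) ^ 2 :=
    fun s hs => by
      have := div_pos hs.1 (hden s hs.2.le)
      positivity
  rw [← intervalIntegral.integral_of_le hρ,
    intervalIntegral.integral_eq_sub_of_hasDerivAt_of_le hρ hcont hderiv
      ((intervalIntegrable_iff_integrableOn_Ioc_of_le hρ).2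
        (intervalIntegral.integrableOn_deriv_of_nonneg hcont hderiv hnonneg))]
  simp [Real.zero_rpow hα.ne']

noncomputable def vdwSoundSpeed (γ b ρ : ℝ) : ℝ :=
  1 / (1 - b * ρ) * √(γ * (γ - 1)) * (ρ / (1 - b * ρ)) ^ ((γ - 1) / 2)

noncomputable def vdwRiemannInvariant (γ b ρ : ℝ) : ℝ :=
  2 * √(γ / (γ - 1)) * (ρ / (1 - b * ρ)) ^ ((γ - 1) / 2)

variable {γ : ℝ}

theorem vdwSoundSpeed_div_eq (hγ : 1 ≤ γ) {s : ℝ} (hs : s ≠ 0) (hbs : 1 - b * s ≠ 0) :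
    vdwSoundSpeed γ b s / s = 2 * √(γ / (γ - 1)) *
      ((γ - 1) / 2 * (s / (1 - b * s)) ^ ((γ - 1) / 2 - 1) / (1 - b * s) ^ 2) := by
  rw [vdwSoundSpeed, Real.sqrt_mul_eq_mul_sqrt_div γ (sub_nonneg.2 hγ), mul_div_assoc,
    Real.div_rpow_div_self _ hs hbs]
  field_simp

theorem integral_vdwSoundSpeed_div (hγ : 1 < γ) (hb : 0 ≤ b) {ρ : ℝ} (hρ : 0 ≤ ρ)
    (hbρ : b * ρ < 1) :
    ∫ s in Ioc 0 ρ, vdwSoundSpeed γ b s / s = vdwRiemannInvariant γ b ρ := by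
  rw [setIntegral_congr_fun measurableSet_Ioc fun s hs =>
      vdwSoundSpeed_div_eq hγ.le hs.1.ne' (by nlinarith [hs.2] : 1 - b * s ≠ 0),
    integral_const_mul, integral_Ioc_div_one_sub_mul_rpow (by linarith) hb hρ hbρ,
    vdwRiemannInvariant]

theorem rpow_mul_vdwRiemannInvariant_rpow (hγ : 1 < γ) {ρ : ℝ} (hρ : 0 ≤ ρ)
    (hbρ : 0 < 1 - b * ρ) :
    ((γ - 1) / (4 * γ)) ^ (1 / (γ - 1)) * vdwRiemannInvariant γ b ρ ^ ((γ - 1) / 2)⁻¹ =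
      ρ / (1 - b * ρ) := by
  have hγ₁ : 0 < γ - 1 := by linarith
  have hu : 0 ≤ ρ / (1 - b * ρ) := div_nonneg hρ hbρ.le
  have hK : (2 * √(γ / (γ - 1))) ^ ((γ - 1) / 2)⁻¹ = ((4 * γ) / (γ - 1)) ^ (1 / (γ - 1)) := by
    rw [show ((γ - 1) / 2)⁻¹ = 2 * (1 / (γ - 1)) by field_simp, Real.rpow_mul (by positivity),
      Real.rpow_two, mul_pow, Real.sq_sqrt (by positivity)]
    congr 1
    ring
  rw [vdwRiemannInvariant, Real.mul_rpow (by positivity) (by positivity),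
    Real.rpow_rpow_inv hu (by positivity), hK, ← mul_assoc, ← Real.mul_rpow (by positivity)
      (by positivity), show (γ - 1) / (4 * γ) * (4 * γ / (γ - 1)) = 1 by field_simp,
    Real.one_rpow, one_mul]

theorem vdwSoundSpeed_eq (hγ : 1 < γ) {ρ : ℝ} (hρ : 0 ≤ ρ) (hbρ : 0 < 1 - b * ρ) :
    vdwSoundSpeed γ b ρ = (γ - 1) / 2 * (1 + b * ((γ - 1) / (4 * γ)) ^ (1 / (γ - 1)) *
      vdwRiemannInvariant γ b ρ ^ ((γ - 1) / 2)⁻¹) * vdwRiemannInvariant γ b ρ := by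
  rw [mul_assoc b, rpow_mul_vdwRiemannInvariant_rpow hγ hρ hbρ, vdwSoundSpeed,
    vdwRiemannInvariant, Real.sqrt_mul_eq_mul_sqrt_div γ (by linarith)]
  field_simp
  ring

end VanDerWaals

/-- For a Van der Waals gas with constant heat capacity,
`c(ρ) = (1/(1−bρ))·√(γ₀(γ₀−1))·(ρ/(1−bρ))^((γ₀−1)/2)` on `0 < ρ < 1/b`, the Riemann
invariant `H(ρ) = ∫₀^ρ c(s)/s ds` equals `2√(γ₀/(γ₀−1))·(ρ/(1−bρ))^((γ₀−1)/2)`, and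
consequently `c = ((γ₀−1)/2)(1 + b̃ H^(ν−1)) H` with `ν = (γ₀+1)/(γ₀−1)` and
`b̃ = b ((γ₀−1)/(4γ₀))^(1/(γ₀−1))`. -/
theorem van_der_waals_H (γ b ν btil : ℝ) (hγ : 1 < γ) (hb : 0 < b)
    (hν : ν = (γ + 1) / (γ - 1))
    (hbt : btil = b * ((γ - 1) / (4 * γ)) ^ (1 / (γ - 1)))
    (c H : ℝ → ℝ)
    (hc : ∀ ρ ∈ Ioo (0:ℝ) (1 / b),
      c ρ = 1 / (1 - b * ρ) * Real.sqrt (γ * (γ - 1)) * (ρ / (1 - b * ρ)) ^ ((γ - 1) / 2))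
    (hH : ∀ ρ ∈ Ioo (0:ℝ) (1 / b), H ρ = ∫ s in Ioc (0:ℝ) ρ, c s / s) :
    (∀ ρ ∈ Ioo (0:ℝ) (1 / b),
      H ρ = 2 * Real.sqrt (γ / (γ - 1)) * (ρ / (1 - b * ρ)) ^ ((γ - 1) / 2)) ∧
    (∀ ρ ∈ Ioo (0:ℝ) (1 / b),
      c ρ = (γ - 1) / 2 * (1 + btil * H ρ ^ (ν - 1)) * H ρ) := by
  have hc' : EqOn c (vdwSoundSpeed γ b) (Ioo 0 (1 / b)) := hc
  have hbρ : ∀ ρ ∈ Ioo (0:ℝ) (1 / b), b * ρ < 1 := fun ρ hρ => by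
    simpa [mul_comm] using (lt_div_iff₀ hb).1 hρ.2
  have hH' : EqOn H (vdwRiemannInvariant γ b) (Ioo 0 (1 / b)) := fun ρ hρ => by
    rw [hH ρ hρ, ← integral_vdwSoundSpeed_div hγ hb.le hρ.1.le (hbρ ρ hρ)]
    exact setIntegral_congr_fun measurableSet_Ioc fun s hs => by
      rw [hc' ⟨hs.1, hs.2.trans_lt hρ.2⟩]
  refine ⟨hH', fun ρ hρ => ?_⟩
  have hν₁ : ν - 1 = ((γ - 1) / 2)⁻¹ := by
    rw [hν]
    field_simp [(sub_pos.2 hγ).ne']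
    ring
  rw [hc' hρ, hH' hρ, hbt, hν₁]
  exact vdwSoundSpeed_eq hγ hρ.1.le (by linarith [hbρ ρ hρ])
end

section
/- Suppose a 2-shock curve r = x₂(t) satisfies dx₂/dt = U and along it w₁⁻ = g(w₂⁻, w₁⁺, w₂⁺) where ℱ(g, w₂⁻, w⁺) = 0. If w solves ∂ₜw₁ + λ₁∂ᵣw₁ = f, ∂ₜw₂ + λ₂∂ᵣw₂ = −f on both sides, then along the shock: (U − λ₁⁻)·∂ᵣw₁⁻ = (U − λ₂⁻)·∂_{w₂⁻}g·∂ᵣw₂⁻ − (∂_{w₂⁻}g + 1)·f⁻ + (U − λ₁⁺)·∂_{w₁⁺}g·∂ᵣw₁⁺ + (U − λ₂⁺)·∂_{w₂⁺}g·∂ᵣw₂⁺ + (∂_{w₁⁺}g − ∂_{w₂⁺}g)·f⁺. -/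
/-!
Along the shock, the total time derivative of a Riemann invariant `w` solving
`∂ₜw + λ ∂ᵣw = s` is `∂ₜw + U ∂ᵣw = (U - λ) ∂ᵣw + s`. Differentiating the compatibility
relation `w₁⁻ = g(w₂⁻, w₁⁺, w₂⁺)` along the shock by the chain rule and replacing every total
derivative by this expression gives the identity.
-/

section

variable {𝕜 : Type*} [NontriviallyNormedField 𝕜]
  {M : Type*} [AddCommGroup M] [Module 𝕜 M] [TopologicalSpace M]

theorem ContinuousLinearMap.apply_pair (D : 𝕜 × 𝕜 →L[𝕜] M) (a b : 𝕜) :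
    D (a, b) = a • D (1, 0) + b • D (0, 1) := by
  rw [← map_smul, ← map_smul, ← map_add]
  simp

theorem ContinuousLinearMap.apply_triple (D : 𝕜 × 𝕜 × 𝕜 →L[𝕜] M) (a b c : 𝕜) :
    D (a, b, c) = a • D (1, 0, 0) + b • D (0, 1, 0) + c • D (0, 0, 1) := by
  rw [← map_smul, ← map_smul, ← map_smul, ← map_add, ← map_add]
  simp

end

section

variable {𝕜 : Type*} [NontriviallyNormedField 𝕜]
  {E : Type*} [NormedAddCommGroup E] [NormedSpace 𝕜 E]

theorem DifferentiableAt.hasDerivAt_comp_graph {W : 𝕜 × 𝕜 → E} {x : 𝕜 → 𝕜} {u t : 𝕜}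
    (hW : DifferentiableAt 𝕜 W (t, x t)) (hx : HasDerivAt x u t) :
    HasDerivAt (fun s => W (s, x s))
      (fderiv 𝕜 W (t, x t) (1, 0) + u • fderiv 𝕜 W (t, x t) (0, 1)) t := by
  have h := hW.hasFDerivAt.comp_hasDerivAt t ((hasDerivAt_id t).prodMk hx)
  rwa [ContinuousLinearMap.apply_pair, one_smul] at h

theorem DifferentiableAt.hasDerivAt_comp_graph_of_transport {W : 𝕜 × 𝕜 → E} {x : 𝕜 → 𝕜}
    {u t lam : 𝕜} {src : E} (hW : DifferentiableAt 𝕜 W (t, x t)) (hx : HasDerivAt x u t)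
    (hpde : fderiv 𝕜 W (t, x t) (1, 0) + lam • fderiv 𝕜 W (t, x t) (0, 1) = src) :
    HasDerivAt (fun s => W (s, x s)) ((u - lam) • fderiv 𝕜 W (t, x t) (0, 1) + src) t := by
  refine (hW.hasDerivAt_comp_graph hx).congr_deriv ?_
  rw [sub_smul, ← hpde]
  abel

end

theorem shock_derivative_identity_general
    (L1 L2 F : ℝ × ℝ × ℝ → ℝ)
    (g : ℝ × ℝ × ℝ → ℝ) (hg : ContDiff ℝ 1 g)
    (Wm1 Wm2 Wp1 Wp2 : ℝ × ℝ → ℝ)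
    (hWm1 : ContDiff ℝ 1 Wm1) (hWm2 : ContDiff ℝ 1 Wm2)
    (hWp1 : ContDiff ℝ 1 Wp1) (hWp2 : ContDiff ℝ 1 Wp2)
    (hpdem1 : ∀ p : ℝ × ℝ,
      fderiv ℝ Wm1 p (1, 0) + L1 (p.2, Wm1 p, Wm2 p) * fderiv ℝ Wm1 p (0, 1)
        = F (p.2, Wm1 p, Wm2 p))
    (hpdem2 : ∀ p : ℝ × ℝ,
      fderiv ℝ Wm2 p (1, 0) + L2 (p.2, Wm1 p, Wm2 p) * fderiv ℝ Wm2 p (0, 1)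
        = - F (p.2, Wm1 p, Wm2 p))
    (hpdep1 : ∀ p : ℝ × ℝ,
      fderiv ℝ Wp1 p (1, 0) + L1 (p.2, Wp1 p, Wp2 p) * fderiv ℝ Wp1 p (0, 1)
        = F (p.2, Wp1 p, Wp2 p))
    (hpdep2 : ∀ p : ℝ × ℝ,
      fderiv ℝ Wp2 p (1, 0) + L2 (p.2, Wp1 p, Wp2 p) * fderiv ℝ Wp2 p (0, 1)
        = - F (p.2, Wp1 p, Wp2 p))
    (x2 U : ℝ → ℝ)
    (hx2 : ∀ t : ℝ, HasDerivAt x2 (U t) t)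
    (hcompat : ∀ t : ℝ,
      Wm1 (t, x2 t) = g (Wm2 (t, x2 t), Wp1 (t, x2 t), Wp2 (t, x2 t))) :
    ∀ t : ℝ,
      (U t - L1 (x2 t, Wm1 (t, x2 t), Wm2 (t, x2 t))) * fderiv ℝ Wm1 (t, x2 t) (0, 1)
        = (U t - L2 (x2 t, Wm1 (t, x2 t), Wm2 (t, x2 t)))
            * fderiv ℝ g (Wm2 (t, x2 t), Wp1 (t, x2 t), Wp2 (t, x2 t)) (1, 0, 0)
            * fderiv ℝ Wm2 (t, x2 t) (0, 1)
          - (fderiv ℝ g (Wm2 (t, x2 t), Wp1 (t, x2 t), Wp2 (t, x2 t)) (1, 0, 0) + 1)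
            * F (x2 t, Wm1 (t, x2 t), Wm2 (t, x2 t))
          + (U t - L1 (x2 t, Wp1 (t, x2 t), Wp2 (t, x2 t)))
            * fderiv ℝ g (Wm2 (t, x2 t), Wp1 (t, x2 t), Wp2 (t, x2 t)) (0, 1, 0)
            * fderiv ℝ Wp1 (t, x2 t) (0, 1)
          + (U t - L2 (x2 t, Wp1 (t, x2 t), Wp2 (t, x2 t)))
            * fderiv ℝ g (Wm2 (t, x2 t), Wp1 (t, x2 t), Wp2 (t, x2 t)) (0, 0, 1)
            * fderiv ℝ Wp2 (t, x2 t) (0, 1)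
          + (fderiv ℝ g (Wm2 (t, x2 t), Wp1 (t, x2 t), Wp2 (t, x2 t)) (0, 1, 0)
              - fderiv ℝ g (Wm2 (t, x2 t), Wp1 (t, x2 t), Wp2 (t, x2 t)) (0, 0, 1))
            * F (x2 t, Wp1 (t, x2 t), Wp2 (t, x2 t)) := by
  intro t
  have hm1 := (hWm1.differentiable one_ne_zero _).hasDerivAt_comp_graph_of_transport (hx2 t)
    (hpdem1 (t, x2 t))
  have hm2 := (hWm2.differentiable one_ne_zero _).hasDerivAt_comp_graph_of_transport (hx2 t)
    (hpdem2 (t, x2 t))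
  have hp1 := (hWp1.differentiable one_ne_zero _).hasDerivAt_comp_graph_of_transport (hx2 t)
    (hpdep1 (t, x2 t))
  have hp2 := (hWp2.differentiable one_ne_zero _).hasDerivAt_comp_graph_of_transport (hx2 t)
    (hpdep2 (t, x2 t))
  have hrhs := (hg.differentiable one_ne_zero _).hasFDerivAt.comp_hasDerivAt t
    (hm2.prodMk (hp1.prodMk hp2))
  rw [funext hcompat] at hm1
  have hderiv := hm1.unique hrhs
  rw [ContinuousLinearMap.apply_triple] at hderiv
  simp only [smul_eq_mul] at hderiv
  linear_combination hderiv

/-- Expression of `∂ᵣw₁⁻` along the shock: if the shock curve `r = x₂(t)` moves with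
speed `U(t)`, the Riemann invariants solve the diagonal system with source `f` on each
side, and along the shock `w₁⁻ = g(w₂⁻, w₁⁺, w₂⁺)`, then the stated identity between
the one-sided `r`-derivatives holds along the shock.  Functions of `(r,w₁,w₂)` are
encoded on `ℝ×ℝ×ℝ`; `(1,0)` is the `t` direction and `(0,1)` the `r` direction. -/
theorem shock_derivative_identity
    (L1 L2 F : ℝ × ℝ × ℝ → ℝ)
    (hL1 : ContDiff ℝ 1 L1) (hL2 : ContDiff ℝ 1 L2) (hF : ContDiff ℝ 1 F)
    (g : ℝ × ℝ × ℝ → ℝ) (hg : ContDiff ℝ 1 g)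
    (Wm1 Wm2 Wp1 Wp2 : ℝ × ℝ → ℝ)
    (hWm1 : ContDiff ℝ 1 Wm1) (hWm2 : ContDiff ℝ 1 Wm2)
    (hWp1 : ContDiff ℝ 1 Wp1) (hWp2 : ContDiff ℝ 1 Wp2)
    (hpdem1 : ∀ p : ℝ × ℝ,
      fderiv ℝ Wm1 p (1, 0) + L1 (p.2, Wm1 p, Wm2 p) * fderiv ℝ Wm1 p (0, 1)
        = F (p.2, Wm1 p, Wm2 p))
    (hpdem2 : ∀ p : ℝ × ℝ,
      fderiv ℝ Wm2 p (1, 0) + L2 (p.2, Wm1 p, Wm2 p) * fderiv ℝ Wm2 p (0, 1)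
        = - F (p.2, Wm1 p, Wm2 p))
    (hpdep1 : ∀ p : ℝ × ℝ,
      fderiv ℝ Wp1 p (1, 0) + L1 (p.2, Wp1 p, Wp2 p) * fderiv ℝ Wp1 p (0, 1)
        = F (p.2, Wp1 p, Wp2 p))
    (hpdep2 : ∀ p : ℝ × ℝ,
      fderiv ℝ Wp2 p (1, 0) + L2 (p.2, Wp1 p, Wp2 p) * fderiv ℝ Wp2 p (0, 1)
        = - F (p.2, Wp1 p, Wp2 p))
    (x2 U : ℝ → ℝ)
    (hx2 : ∀ t : ℝ, HasDerivAt x2 (U t) t)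
    (hcompat : ∀ t : ℝ,
      Wm1 (t, x2 t) = g (Wm2 (t, x2 t), Wp1 (t, x2 t), Wp2 (t, x2 t))) :
    ∀ t : ℝ,
      (U t - L1 (x2 t, Wm1 (t, x2 t), Wm2 (t, x2 t))) * fderiv ℝ Wm1 (t, x2 t) (0, 1)
        = (U t - L2 (x2 t, Wm1 (t, x2 t), Wm2 (t, x2 t)))
            * fderiv ℝ g (Wm2 (t, x2 t), Wp1 (t, x2 t), Wp2 (t, x2 t)) (1, 0, 0)
            * fderiv ℝ Wm2 (t, x2 t) (0, 1)
          - (fderiv ℝ g (Wm2 (t, x2 t), Wp1 (t, x2 t), Wp2 (t, x2 t)) (1, 0, 0) + 1)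
            * F (x2 t, Wm1 (t, x2 t), Wm2 (t, x2 t))
          + (U t - L1 (x2 t, Wp1 (t, x2 t), Wp2 (t, x2 t)))
            * fderiv ℝ g (Wm2 (t, x2 t), Wp1 (t, x2 t), Wp2 (t, x2 t)) (0, 1, 0)
            * fderiv ℝ Wp1 (t, x2 t) (0, 1)
          + (U t - L2 (x2 t, Wp1 (t, x2 t), Wp2 (t, x2 t)))
            * fderiv ℝ g (Wm2 (t, x2 t), Wp1 (t, x2 t), Wp2 (t, x2 t)) (0, 0, 1)
            * fderiv ℝ Wp2 (t, x2 t) (0, 1)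
          + (fderiv ℝ g (Wm2 (t, x2 t), Wp1 (t, x2 t), Wp2 (t, x2 t)) (0, 1, 0)
              - fderiv ℝ g (Wm2 (t, x2 t), Wp1 (t, x2 t), Wp2 (t, x2 t)) (0, 0, 1))
            * F (x2 t, Wp1 (t, x2 t), Wp2 (t, x2 t)) :=
  shock_derivative_identity_general L1 L2 F g hg Wm1 Wm2 Wp1 Wp2 hWm1 hWm2 hWp1 hWp2 hpdem1 hpdem2
    hpdep1 hpdep2 x2 U hx2 hcompat
end
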